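/- arXiv:1009.5489 — 9 statements merged into one kernel-verified Lean document; each statement's English description precedes it below -/
import Mathlib

section
/- For every integer k ≥ 0 and every real μ ≥ k+2, there exists a unique real λ > 0 satisfying λ·f_k(λ) = μ·f_{k+1}(λ), where f_k(λ) = Σ_{i≥k} e^{-λ} λ^i / i!. Moreover, this λ satisfies λ ≤ μ. -/
/-!
Write `f_k(l) = e^{-l} l^k T_k(l)` with `T_k(x) = ∑_j x^j / (j+k)!`. Since
`T_k = 1/k! + x T_{k+1}`, the equation `l f_k(l) = μ f_{k+1}(l)` becomes
`μ = φ(l) := l + 1 / (k! T_{k+1}(l))`. Obviously `φ(l) > l`, which gives `l ≤ μ`, and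
`φ(1) ≤ k + 2`, so the intermediate value theorem on `[1, μ]` produces a solution.
It is unique because `φ` is strictly increasing, i.e. `T(b) - T(a) < (b - a) k! T(a) T(b)`
for `T = T_{k+1}` and `0 ≤ a < b`: expanding both sides as power series in `a` and `b`
(the right one by the Cauchy product), this holds coefficientwise since
`(i+k+1)! (j+k+1)! ≤ k! (i+j+k+2)!`.
-/

/-- The upper tail of a Poisson(x) distribution: `f_k(x) = ∑_{i ≥ k} e^{-x} x^i / i!`. -/
noncomputable def fpois (k : ℕ) (x : ℝ) : ℝ :=
  ∑' i : ℕ, if k ≤ i then Real.exp (-x) * x ^ i / (Nat.factorial i) else 0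

open Finset
open scoped Nat

theorem Nat.factorial_add_mul_factorial_le {k a : ℕ} (hka : k ≤ a) (n : ℕ) :
    (k + n)! * a ! ≤ k ! * (a + n)! := by
  rw [← Nat.factorial_mul_ascFactorial k n, ← Nat.factorial_mul_ascFactorial a n,
    mul_right_comm, mul_assoc]
  gcongr

theorem one_div_factorial_le_factorial_div (k i j : ℕ) :
    (1 : ℝ) / (i + j + 1 + (k + 1))! ≤ k ! / ((i + (k + 1))! * (j + (k + 1))!) := by
  rw [div_le_div_iff₀ (by positivity) (by positivity), one_mul]
  have h := Nat.factorial_add_mul_factorial_le (k := k) (a := i + (k + 1)) (by omega) (j + 1)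
  rw [show k + (j + 1) = j + (k + 1) by omega,
    show i + (k + 1) + (j + 1) = i + j + 1 + (k + 1) by omega, mul_comm] at h
  exact_mod_cast h

theorem one_div_factorial_lt_factorial_div (k : ℕ) :
    (1 : ℝ) / (k + 2)! < k ! / ((k + 1)! * (k + 1)!) := by
  rw [div_lt_div_iff₀ (by positivity) (by positivity), one_mul]
  have hk : (0 : ℝ) < k ! := by positivity
  push_cast [Nat.factorial_succ]
  nlinarith [mul_pos hk hk]

-- `x ^ k * expTail k x = exp x - ∑ i < k, x ^ i / i!`
noncomputable def expTail (k : ℕ) (x : ℝ) : ℝ := ∑' j : ℕ, x ^ j / (j + k)!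

theorem summable_norm_expTail (k : ℕ) (x : ℝ) :
    Summable fun j : ℕ => ‖x ^ j / (j + k)!‖ := by
  refine (Real.summable_pow_div_factorial |x|).of_nonneg_of_le (fun _ => norm_nonneg _)
    fun j => ?_
  rw [norm_div, norm_pow, Real.norm_eq_abs, Real.norm_natCast]
  gcongr
  omega

theorem summable_expTail (k : ℕ) (x : ℝ) : Summable fun j : ℕ => x ^ j / (j + k)! :=
  (summable_norm_expTail k x).of_norm

theorem continuous_expTail (k : ℕ) : Continuous (expTail k) := by
  refine continuous_iff_continuousAt.2 fun x => ?_
  set R := |x| + 1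
  have hbound : ∀ j, ∀ y ∈ Set.Icc (-R) R, ‖y ^ j / (j + k)!‖ ≤ R ^ j / (j + k)! := by
    intro j y hy
    rw [norm_div, norm_pow, Real.norm_eq_abs, Real.norm_natCast]
    gcongr
    exact abs_le.2 hy
  refine (continuousOn_tsum (fun j => (continuous_pow j).div_const _ |>.continuousOn)
    (summable_expTail k R) hbound).continuousAt (Icc_mem_nhds ?_ ?_)
  · linarith [neg_abs_le x]
  · linarith [le_abs_self x]

theorem expTail_pos (k : ℕ) {x : ℝ} (hx : 0 ≤ x) : 0 < expTail k x := by
  have h0 : x ^ 0 / (0 + k)! ≤ expTail k x :=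
    (summable_expTail k x).le_tsum 0 fun j _ => by positivity
  exact lt_of_lt_of_le (by positivity) h0

theorem expTail_eq_add (k : ℕ) (x : ℝ) : expTail k x = 1 / k ! + x * expTail (k + 1) x := by
  rw [expTail, (summable_expTail k x).tsum_eq_zero_add, expTail, ← tsum_mul_left]
  congr 1
  · simp
  · refine tsum_congr fun j => ?_
    rw [pow_succ', add_right_comm, add_assoc j k, mul_div_assoc]

theorem one_div_factorial_le_expTail (k : ℕ) {x : ℝ} (hx : 0 ≤ x) :
    1 / k ! ≤ expTail k x := by
  rw [expTail_eq_add]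
  have := expTail_pos (k + 1) hx
  nlinarith

theorem fpois_eq_mul_expTail (k : ℕ) (x : ℝ) :
    fpois k x = Real.exp (-x) * x ^ k * expTail k x := by
  have hterm : (fun n => Real.exp (-x) * x ^ k * (x ^ n / (n + k)!)) =
      fun n => if k ≤ n + k then Real.exp (-x) * x ^ (n + k) / (n + k)! else 0 := by
    funext n
    rw [if_pos le_add_self, pow_add]
    ring
  have h := (summable_expTail k x).hasSum.mul_left (Real.exp (-x) * x ^ k)
  rw [hterm] at h
  have h' := (hasSum_nat_add_iff (f := fun i =>
    if k ≤ i then Real.exp (-x) * x ^ i / i ! else 0) k).1 h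
  rw [sum_eq_zero fun i hi => if_neg (by simpa using hi), add_zero] at h'
  exact h'.tsum_eq

theorem hasSum_expTail_sub (k : ℕ) (a b : ℝ) :
    HasSum (fun m => (b - a) * ((∑ i ∈ range (m + 1), b ^ i * a ^ (m - i)) / (m + 1 + k)!))
      (expTail k b - expTail k a) := by
  have h := (hasSum_nat_add_iff' 1).2
    ((summable_expTail k b).hasSum.sub (summable_expTail k a).hasSum)
  simp only [range_one, sum_singleton, pow_zero, sub_self, sub_zero] at h
  have hterm (m : ℕ) : (b - a) * ((∑ i ∈ range (m + 1), b ^ i * a ^ (m - i)) / (m + 1 + k)!) =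
      b ^ (m + 1) / (m + 1 + k)! - a ^ (m + 1) / (m + 1 + k)! := by
    rw [← sub_div, ← geom_sum₂_mul, add_tsub_cancel_right]
    ring
  simp only [hterm]
  exact h

-- A discrete form of `T' < k! T²`, which is what makes `truncMean k` increasing.
theorem expTail_succ_sub_lt (k : ℕ) {a b : ℝ} (ha : 0 ≤ a) (hab : a < b) :
    expTail (k + 1) b - expTail (k + 1) a <
      (b - a) * (k ! * (expTail (k + 1) b * expTail (k + 1) a)) := by
  have hb : 0 ≤ b := ha.trans hab.le
  have hprod := (hasSum_sum_range_mul_of_summable_norm (summable_norm_expTail (k + 1) b)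
    (summable_norm_expTail (k + 1) a)).mul_left ((b - a) * k !)
  rw [mul_assoc] at hprod
  refine hasSum_lt (fun m => ?_) ?_ (hasSum_expTail_sub (k + 1) a b) hprod (i := 0)
  · simp only [mul_assoc]
    refine mul_le_mul_of_nonneg_left ?_ (sub_nonneg.2 hab.le)
    rw [sum_div, mul_sum]
    refine sum_le_sum fun i hi => ?_
    obtain ⟨j, rfl⟩ := Nat.exists_eq_add_of_le (mem_range_succ_iff.1 hi)
    rw [Nat.add_sub_cancel_left]
    calc b ^ i * a ^ j / (i + j + 1 + (k + 1))!
        = b ^ i * a ^ j * (1 / (i + j + 1 + (k + 1))!) := by ring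
      _ ≤ b ^ i * a ^ j * (k ! / ((i + (k + 1))! * (j + (k + 1))!)) :=
        mul_le_mul_of_nonneg_left (one_div_factorial_le_factorial_div k i j)
          (mul_nonneg (pow_nonneg hb i) (pow_nonneg ha j))
      _ = k ! * (b ^ i / (i + (k + 1))! * (a ^ j / (j + (k + 1))!)) := by ring
  · simp only [zero_add, range_one, sum_singleton, pow_zero, tsub_zero, mul_one]
    rw [add_comm 1]
    convert mul_lt_mul_of_pos_left (one_div_factorial_lt_factorial_div k) (sub_pos.2 hab) using 1
    ring

-- The mean of a Poisson(l) variable conditioned on being at least `k + 1`.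
noncomputable def truncMean (k : ℕ) (l : ℝ) : ℝ := l + 1 / (k ! * expTail (k + 1) l)

theorem mul_fpois_eq_mul_fpois_succ_iff (k : ℕ) {l : ℝ} (μ : ℝ) (hl : 0 < l) :
    l * fpois k l = μ * fpois (k + 1) l ↔ truncMean k l = μ := by
  have hT := expTail_pos (k + 1) hl.le
  have hc : 0 < Real.exp (-l) * l ^ (k + 1) := by positivity
  have hmean : truncMean k l = (1 / k ! + l * expTail (k + 1) l) / expTail (k + 1) l := by
    rw [truncMean]
    field_simp
    ring
  have hlhs :
      l * fpois k l = Real.exp (-l) * l ^ (k + 1) * (1 / k ! + l * expTail (k + 1) l) := by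
    rw [fpois_eq_mul_expTail, expTail_eq_add k l]
    ring
  have hrhs : μ * fpois (k + 1) l = Real.exp (-l) * l ^ (k + 1) * (μ * expTail (k + 1) l) := by
    rw [fpois_eq_mul_expTail]
    ring
  rw [hlhs, hrhs, mul_right_inj' hc.ne', hmean, div_eq_iff hT.ne']

theorem lt_truncMean (k : ℕ) {l : ℝ} (hl : 0 ≤ l) : l < truncMean k l :=
  lt_add_of_pos_right l (one_div_pos.2 (mul_pos (by positivity) (expTail_pos (k + 1) hl)))

theorem truncMean_one_le (k : ℕ) : truncMean k 1 ≤ k + 2 := by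
  have hT := one_div_factorial_le_expTail (k + 1) zero_le_one
  have hpos := expTail_pos (k + 1) zero_le_one
  suffices 1 / (k ! * expTail (k + 1) 1) ≤ k + 1 by rw [truncMean]; linarith
  rw [div_le_iff₀ (mul_pos (by positivity) hpos)]
  rw [div_le_iff₀ (by positivity)] at hT
  push_cast [Nat.factorial_succ] at hT
  linarith

theorem truncMean_strictMonoOn (k : ℕ) : StrictMonoOn (truncMean k) (Set.Ici 0) := by
  intro a ha b hb hab
  have hTa := expTail_pos (k + 1) ha
  have hTb := expTail_pos (k + 1) hb
  have hk : (0 : ℝ) < k ! := by positivity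
  have hkey := mul_lt_mul_of_pos_left (expTail_succ_sub_lt k ha hab) hk
  suffices 1 / (k ! * expTail (k + 1) a) - 1 / (k ! * expTail (k + 1) b) < b - a by
    rw [truncMean, truncMean]; linarith
  rw [div_sub_div _ _ (by positivity) (by positivity), div_lt_iff₀ (by positivity)]
  linarith

theorem continuousOn_truncMean (k : ℕ) : ContinuousOn (truncMean k) (Set.Ici 0) :=
  continuousOn_id.add <| continuousOn_const.div
    (continuous_const.mul (continuous_expTail (k + 1))).continuousOn
    fun _ hx => (mul_pos (by positivity) (expTail_pos (k + 1) hx)).ne'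

theorem exists_truncMean_eq (k : ℕ) {μ : ℝ} (hμ : (k : ℝ) + 2 ≤ μ) :
    ∃ l, 0 < l ∧ truncMean k l = μ := by
  have h1 : (1 : ℝ) ≤ μ := by linarith [k.cast_nonneg (α := ℝ)]
  have hcont : ContinuousOn (truncMean k) (Set.Icc 1 μ) := (continuousOn_truncMean k).mono
    (Set.Icc_subset_Ici_self.trans (Set.Ici_subset_Ici.2 zero_le_one))
  obtain ⟨l, hl, hlμ⟩ := intermediate_value_Icc h1 hcont
    ⟨(truncMean_one_le k).trans hμ, (lt_truncMean k (by linarith)).le⟩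
  exact ⟨l, zero_lt_one.trans_le hl.1, hlμ⟩

/-- For every integer `k ≥ 0` and every real `μ ≥ k + 2`, there exists a unique `λ > 0`
with `λ f_k(λ) = μ f_{k+1}(λ)`; moreover this `λ` satisfies `λ ≤ μ`. -/
theorem stmt0 (k : ℕ) (μ : ℝ) (hμ : (k : ℝ) + 2 ≤ μ) :
    (∃! l : ℝ, 0 < l ∧ l * fpois k l = μ * fpois (k + 1) l) ∧
    (∀ l : ℝ, 0 < l → l * fpois k l = μ * fpois (k + 1) l → l ≤ μ) := by
  obtain ⟨l, hl, hlμ⟩ := exists_truncMean_eq k hμ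
  refine ⟨⟨l, ⟨hl, (mul_fpois_eq_mul_fpois_succ_iff k μ hl).2 hlμ⟩, ?_⟩, ?_⟩
  · rintro y ⟨hy, hyμ⟩
    rw [mul_fpois_eq_mul_fpois_succ_iff k μ hy, ← hlμ] at hyμ
    exact (truncMean_strictMonoOn k).injOn hy.le hl.le hyμ
  · intro y hy hyμ
    rw [mul_fpois_eq_mul_fpois_succ_iff k μ hy] at hyμ
    exact hyμ ▸ (lt_truncMean k hy.le).le
end

section
/- Fix a constant c > 1. Suppose for each k we have μ = μ(k) ≥ c·k with μ ≥ k+2, and let λ = λ(k) be the unique positive real satisfying λ·f_k(λ) = μ·f_{k+1}(λ). Then μ(k) − λ(k) → 0 and f_k(λ(k)) → 1 as k → ∞. -/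
open Filter Topology Finset

noncomputable def poissonTerm (x : ℝ) (i : ℕ) : ℝ := Real.exp (-x) * x ^ i / i.factorial

section PoissonTerm

variable {x : ℝ}

lemma poissonTerm_nonneg (hx : 0 ≤ x) (i : ℕ) : 0 ≤ poissonTerm x i := by
  unfold poissonTerm; positivity

lemma poissonTerm_pos (hx : 0 < x) (i : ℕ) : 0 < poissonTerm x i := by
  unfold poissonTerm; positivity

lemma poissonTerm_succ (x : ℝ) (i : ℕ) :
    poissonTerm x (i + 1) = poissonTerm x i * (x / (i + 1)) := by
  unfold poissonTerm
  rw [Nat.factorial_succ, pow_succ]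
  push_cast
  field_simp

lemma mul_poissonTerm (x : ℝ) (i : ℕ) : x * poissonTerm x i = (i + 1) * poissonTerm x (i + 1) := by
  rw [poissonTerm_succ]
  field_simp

lemma hasSum_poissonTerm (x : ℝ) : HasSum (poissonTerm x) 1 := by
  have h := (NormedSpace.expSeries_div_hasSum_exp x).mul_left (Real.exp (-x))
  rw [← Real.exp_eq_exp_ℝ, ← Real.exp_add, neg_add_cancel, Real.exp_zero] at h
  have hterm : poissonTerm x = fun i => Real.exp (-x) * (x ^ i / i.factorial) :=
    funext fun i => mul_div_assoc _ _ _
  rw [hterm]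
  exact h

lemma poissonTerm_mul_pow_le {r : ℝ} (hx : 0 ≤ x) (hr : 0 ≤ r) (k j : ℕ)
    (hkj : r * (k + j) ≤ x) :
    poissonTerm x k * r ^ j ≤ poissonTerm x (k + j) := by
  induction j with
  | zero => simp
  | succ j ih =>
    have hratio : r ≤ x / (k + j + 1) := by
      rw [le_div_iff₀ (by positivity)]; push_cast at hkj; linarith
    calc poissonTerm x k * r ^ (j + 1) = poissonTerm x k * r ^ j * r := by ring
      _ ≤ poissonTerm x (k + j) * (x / (k + j + 1)) := by
        gcongr
        · exact poissonTerm_nonneg hx _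
        · exact ih (le_trans (by push_cast; nlinarith) hkj)
      _ = poissonTerm x (k + (j + 1)) := by rw [← add_assoc, poissonTerm_succ]; push_cast; ring

lemma poissonTerm_le_of_le {i j : ℕ} (hij : i ≤ j) (hjx : (j : ℝ) ≤ x) :
    poissonTerm x i ≤ poissonTerm x j := by
  obtain ⟨d, rfl⟩ := Nat.exists_eq_add_of_le hij
  have h := poissonTerm_mul_pow_le ((Nat.cast_nonneg _).trans hjx) zero_le_one i d
    (by push_cast at hjx; linarith)
  rwa [one_pow, mul_one] at h

lemma poissonTerm_le_pow_mul_exp {t : ℝ} (ht : 0 < t) (hx : 0 ≤ x) (n : ℕ) :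
    poissonTerm x n ≤ t ^ n * Real.exp (x / t - x) := by
  have h := Real.pow_div_factorial_le_exp (x / t) (by positivity) n
  calc poissonTerm x n = Real.exp (-x) * t ^ n * ((x / t) ^ n / n.factorial) := by
        unfold poissonTerm; rw [div_pow]; field_simp
    _ ≤ Real.exp (-x) * t ^ n * Real.exp (x / t) := by gcongr
    _ = t ^ n * Real.exp (x / t - x) := by rw [sub_eq_add_neg, Real.exp_add]; ring

end PoissonTerm

section Fpois

variable {x : ℝ}

lemma fpois_eq_one_sub_sum (k : ℕ) (x : ℝ) :
    fpois k x = 1 - ∑ i ∈ range k, poissonTerm x i := by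
  have htail := (hasSum_nat_add_iff' k).mpr (hasSum_poissonTerm x)
  have h : HasSum (fun i => if k ≤ i then poissonTerm x i else 0)
      (1 - ∑ i ∈ range k, poissonTerm x i) := by
    rw [← hasSum_nat_add_iff' k, sum_ite_of_false fun i hi => not_le.2 (mem_range.1 hi)]
    simpa using htail
  exact h.tsum_eq

lemma hasSum_fpois (k : ℕ) (x : ℝ) : HasSum (fun i => poissonTerm x (i + k)) (fpois k x) := by
  rw [fpois_eq_one_sub_sum]
  exact (hasSum_nat_add_iff' k).mpr (hasSum_poissonTerm x)

lemma fpois_eq_add_fpois_succ (k : ℕ) (x : ℝ) :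
    fpois k x = poissonTerm x k + fpois (k + 1) x := by
  rw [fpois_eq_one_sub_sum, fpois_eq_one_sub_sum, sum_range_succ]
  ring

lemma fpois_le_one (hx : 0 ≤ x) (k : ℕ) : fpois k x ≤ 1 := by
  rw [fpois_eq_one_sub_sum]
  linarith [sum_nonneg fun i (_ : i ∈ range k) => poissonTerm_nonneg hx i]

lemma fpois_succ_le (hx : 0 ≤ x) (k : ℕ) : fpois (k + 1) x ≤ fpois k x := by
  rw [fpois_eq_add_fpois_succ k]
  linarith [poissonTerm_nonneg hx k]

lemma fpois_nonneg (hx : 0 ≤ x) (k : ℕ) : 0 ≤ fpois k x :=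
  (hasSum_fpois k x).nonneg fun _ => poissonTerm_nonneg hx _

lemma fpois_pos (hx : 0 < x) (k : ℕ) : 0 < fpois k x := by
  refine (poissonTerm_pos hx k).trans_le ?_
  simpa using le_hasSum (hasSum_fpois k x) 0 fun _ _ => poissonTerm_nonneg hx.le _

lemma sum_poissonTerm_le_fpois (hx : 0 ≤ x) (k m : ℕ) :
    ∑ j ∈ range m, poissonTerm x (j + k) ≤ fpois k x :=
  sum_le_hasSum _ (fun _ _ => poissonTerm_nonneg hx _) (hasSum_fpois k x)

lemma one_sub_mul_poissonTerm_le_fpois_succ {k : ℕ} (hkx : (k : ℝ) + 1 ≤ x) :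
    1 - x * poissonTerm x k ≤ fpois (k + 1) x := by
  have hmono : ∀ i ∈ range (k + 1), poissonTerm x i ≤ poissonTerm x k := fun i hi =>
    poissonTerm_le_of_le (Nat.lt_succ_iff.1 (mem_range.1 hi)) (by linarith)
  have hsum := sum_le_card_nsmul _ _ _ hmono
  rw [card_range, nsmul_eq_mul] at hsum
  push_cast at hsum
  rw [fpois_eq_one_sub_sum]
  nlinarith [poissonTerm_nonneg (x := x) (by linarith [(k.cast_nonneg : (0 : ℝ) ≤ k)]) k]

end Fpois

/-- The tail `f_{k+1}(L)` is at least `p_k(L) ∑_{j=1}^m q^j` with `q = L / (k + m)`. -/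
lemma mul_one_sub_pow_le {k m : ℕ} {L M : ℝ} (hL : 0 < L) (hLm : L ≤ k + m)
    (heq : (M - L) * fpois (k + 1) L = L * poissonTerm L k) :
    M * (1 - (L / (k + m)) ^ m) ≤ k + m := by
  have hkm : (0 : ℝ) < k + m := hL.trans_le hLm
  set q := L / (k + m) with hq
  have hq0 : 0 < q := div_pos hL hkm
  have hq1 : q ≤ 1 := (div_le_one hkm).2 hLm
  have hLq : L = q * (k + m) := by rw [hq, div_mul_cancel₀ _ hkm.ne']
  have hp := poissonTerm_pos hL k
  have htail : poissonTerm L k * (q * ∑ j ∈ range m, q ^ j) ≤ fpois (k + 1) L := by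
    rw [mul_sum, mul_sum]
    refine le_trans (sum_le_sum fun j hj => ?_) (sum_poissonTerm_le_fpois hL.le (k + 1) m)
    have hj : q * (k + (j + 1 : ℕ)) ≤ L := by
      have hjm : ((j + 1 : ℕ) : ℝ) ≤ m := by exact_mod_cast mem_range.1 hj
      rw [hLq]; gcongr
    rw [← pow_succ', show j + (k + 1) = k + (j + 1) by ring]
    exact poissonTerm_mul_pow_le hL.le hq0.le k (j + 1) hj
  have hML : 0 ≤ M - L := by
    by_contra! h
    nlinarith [fpois_nonneg hL.le (k + 1)]
  have hgeom : (M - L) * ∑ j ∈ range m, q ^ j ≤ k + m := by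
    have h := mul_le_mul_of_nonneg_left htail hML
    rw [heq] at h
    have hLp : q * poissonTerm L k * (k + m) = L * poissonTerm L k := by
      rw [mul_right_comm, ← hLq]
    refine le_of_mul_le_mul_left ?_ (mul_pos hq0 hp)
    calc q * poissonTerm L k * ((M - L) * ∑ j ∈ range m, q ^ j)
        = (M - L) * (poissonTerm L k * (q * ∑ j ∈ range m, q ^ j)) := by ring
      _ ≤ L * poissonTerm L k := h
      _ = q * poissonTerm L k * (k + m) := hLp.symm
  have h := mul_le_mul_of_nonneg_left hgeom (sub_nonneg.2 hq1)
  rw [mul_left_comm, mul_neg_geom_sum] at h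
  nlinarith [pow_nonneg hq0.le m]

/-- If `λ < (1 + δ) k`, take `m = ⌈2δk⌉` in `mul_one_sub_pow_le`: then `q ≤ (1 + δ) / (1 + 2δ)`,
so `q^m → 0` and `μ ≤ (1 + o(1)) (1 + 2δ) k`, contradicting `μ ≥ (1 + 3δ) k`. -/
lemma eventually_le_of_mul_fpois_succ_eq {δ : ℝ} (hδ : 0 < δ) {μ lam : ℕ → ℝ}
    (hμ : ∀ k : ℕ, (1 + 3 * δ) * k ≤ μ k) (hlam_pos : ∀ k, 0 < lam k)
    (hdiff : ∀ k, (μ k - lam k) * fpois (k + 1) (lam k) = lam k * poissonTerm (lam k) k) :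
    ∀ᶠ k : ℕ in atTop, (1 + δ) * k ≤ lam k := by
  set q₀ := (1 + δ) / (1 + 2 * δ)
  have hq₀ : q₀ < 1 := by rw [div_lt_one (by positivity)]; linarith
  have hm : Tendsto (fun k : ℕ => ⌈2 * δ * k⌉₊) atTop atTop :=
    tendsto_nat_ceil_atTop.comp
      (tendsto_natCast_atTop_atTop.const_mul_atTop (by positivity))
  have hpow := (tendsto_pow_atTop_nhds_zero_of_lt_one (by positivity) hq₀).comp hm
  filter_upwards [hpow.eventually_le_const (u := δ / (2 * (1 + 3 * δ))) (by positivity),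
    tendsto_natCast_atTop_atTop.eventually_gt_atTop (2 / δ)] with k hsmall hk
  by_contra! hlt
  set m := ⌈2 * δ * k⌉₊
  have hk0 : (0 : ℝ) < k := by nlinarith [hlam_pos k]
  have hm_ge : 2 * δ * k ≤ m := Nat.le_ceil _
  have hm_lt : (m : ℝ) < 2 * δ * k + 1 := Nat.ceil_lt_add_one (by positivity)
  have hq : lam k / (k + m) ≤ q₀ := by
    rw [div_le_div_iff₀ (by positivity) (by positivity)]; nlinarith
  have hpow_le : (lam k / (k + m)) ^ m ≤ q₀ ^ m :=
    pow_le_pow_left₀ (div_nonneg (hlam_pos k).le (by positivity)) hq m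
  have hbound := mul_one_sub_pow_le (hlam_pos k) (by linarith) (hdiff k)
  have hμ0 : 0 ≤ μ k := le_trans (by positivity) (hμ k)
  have hδk : 2 < δ * k := by rwa [div_lt_iff₀ hδ, mul_comm] at hk
  have hε : q₀ ^ m * (2 * (1 + 3 * δ)) ≤ δ := by
    rwa [Function.comp_apply, le_div_iff₀ (by positivity)] at hsmall
  have hε1 : q₀ ^ m ≤ 1 := pow_le_one₀ (by positivity) hq₀.le
  nlinarith [mul_le_mul_of_nonneg_left hpow_le hμ0, mul_le_mul_of_nonneg_right hε hk0.le,
    mul_le_mul_of_nonneg_right (hμ k) (sub_nonneg.2 hε1)]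

lemma mul_poissonTerm_le {δ x : ℝ} (hδ : 0 < δ) {k : ℕ} (hx : (1 + δ) * k ≤ x) :
    x * poissonTerm x k ≤ (1 + δ) * ((k + 1) * ((1 + δ) * Real.exp (-δ)) ^ k) := by
  have hx0 : 0 ≤ x := le_trans (by positivity) hx
  have hexp : x / (1 + δ) - x ≤ -δ * k := by
    rw [div_sub' (by positivity), div_le_iff₀ (by positivity)]; nlinarith
  calc x * poissonTerm x k = (k + 1) * poissonTerm x (k + 1) := mul_poissonTerm x k
    _ ≤ (k + 1) * ((1 + δ) ^ (k + 1) * Real.exp (x / (1 + δ) - x)) := by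
      gcongr; exact poissonTerm_le_pow_mul_exp (by positivity) hx0 _
    _ ≤ (k + 1) * ((1 + δ) ^ (k + 1) * Real.exp (-δ * k)) := by gcongr
    _ = (1 + δ) * ((k + 1) * ((1 + δ) * Real.exp (-δ)) ^ k) := by
      rw [mul_comm (-δ), Real.exp_nat_mul, mul_pow]; ring

lemma tendsto_mul_poissonTerm_of_eventually_le {δ : ℝ} (hδ : 0 < δ) {x : ℕ → ℝ}
    (hx : ∀ᶠ k : ℕ in atTop, (1 + δ) * k ≤ x k) :
    Tendsto (fun k => x k * poissonTerm (x k) k) atTop (𝓝 0) := by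
  set ρ := (1 + δ) * Real.exp (-δ)
  have hρ : ρ < 1 := by
    have h := mul_lt_mul_of_pos_right (Real.add_one_lt_exp hδ.ne') (Real.exp_pos (-δ))
    rwa [← Real.exp_add, add_neg_cancel, Real.exp_zero, add_comm] at h
  have hbound : Tendsto (fun k : ℕ => (1 + δ) * ((k + 1) * ρ ^ k)) atTop (𝓝 0) := by
    have h := (tendsto_self_mul_const_pow_of_lt_one (by positivity) hρ).add
      (tendsto_pow_atTop_nhds_zero_of_lt_one (by positivity) hρ)
    simpa [add_mul] using h.const_mul (1 + δ)
  refine squeeze_zero' ?_ (hx.mono fun k hk => mul_poissonTerm_le hδ hk) hbound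
  filter_upwards [hx] with k hk
  have hx0 : 0 ≤ x k := le_trans (by positivity) hk
  exact mul_nonneg hx0 (poissonTerm_nonneg hx0 k)

lemma tendsto_fpois_succ_of_eventually_le {δ : ℝ} (hδ : 0 < δ) {x : ℕ → ℝ}
    (hx : ∀ᶠ k : ℕ in atTop, (1 + δ) * k ≤ x k) :
    Tendsto (fun k => fpois (k + 1) (x k)) atTop (𝓝 1) := by
  have hlower : Tendsto (fun k => 1 - x k * poissonTerm (x k) k) atTop (𝓝 1) := by
    simpa using (tendsto_mul_poissonTerm_of_eventually_le hδ hx).const_sub 1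
  refine tendsto_of_tendsto_of_tendsto_of_le_of_le' hlower tendsto_const_nhds ?_ ?_
  · filter_upwards [hx, tendsto_natCast_atTop_atTop.eventually_ge_atTop (1 / δ)] with k hk hkδ
    rw [div_le_iff₀ hδ] at hkδ
    exact one_sub_mul_poissonTerm_le_fpois_succ (by nlinarith)
  · filter_upwards [hx] with k hk
    exact fpois_le_one (le_trans (by positivity) hk) _

theorem stmt1_general (c : ℝ) (hc : 1 < c) (μ lam : ℕ → ℝ)
    (hμc : ∀ k : ℕ, c * k ≤ μ k)
    (hlam_pos : ∀ k : ℕ, 0 < lam k)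
    (hlam_eq : ∀ k : ℕ, lam k * fpois k (lam k) = μ k * fpois (k + 1) (lam k)) :
    Filter.Tendsto (fun k => μ k - lam k) Filter.atTop (nhds 0) ∧
    Filter.Tendsto (fun k => fpois k (lam k)) Filter.atTop (nhds 1) := by
  have hdiff k : (μ k - lam k) * fpois (k + 1) (lam k) = lam k * poissonTerm (lam k) k := by
    linear_combination lam k * fpois_eq_add_fpois_succ k (lam k) - hlam_eq k
  set δ := (c - 1) / 3
  have hδ : 0 < δ := by positivity
  have hlam : ∀ᶠ k : ℕ in atTop, (1 + δ) * k ≤ lam k :=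
    eventually_le_of_mul_fpois_succ_eq hδ (fun k => by convert hμc k using 2; ring) hlam_pos
      hdiff
  have hf := tendsto_fpois_succ_of_eventually_le hδ hlam
  refine ⟨?_, ?_⟩
  · have hquot : (fun k => μ k - lam k) =
        fun k => lam k * poissonTerm (lam k) k / fpois (k + 1) (lam k) :=
      funext fun k => eq_div_of_mul_eq (fpois_pos (hlam_pos k) _).ne' (hdiff k)
    rw [hquot, ← zero_div 1]
    exact (tendsto_mul_poissonTerm_of_eventually_le hδ hlam).div hf one_ne_zero
  · exact tendsto_of_tendsto_of_tendsto_of_le_of_le hf tendsto_const_nhds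
      (fun k => fpois_succ_le (hlam_pos k).le k) (fun k => fpois_le_one (hlam_pos k).le k)

/-- Fix `c > 1`. If for each `k` we have `μ k ≥ c·k`, `μ k ≥ k + 2`, and `lam k` is the
(unique) positive root of `λ f_k(λ) = μ(k) f_{k+1}(λ)`, then `μ k − lam k → 0` and
`f_k(lam k) → 1` as `k → ∞`. -/
theorem stmt1 (c : ℝ) (hc : 1 < c) (μ lam : ℕ → ℝ)
    (hμc : ∀ k : ℕ, c * k ≤ μ k)
    (hμ2 : ∀ k : ℕ, (k : ℝ) + 2 ≤ μ k)
    (hlam_pos : ∀ k : ℕ, 0 < lam k)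
    (hlam_eq : ∀ k : ℕ, lam k * fpois k (lam k) = μ k * fpois (k + 1) (lam k)) :
    Filter.Tendsto (fun k => μ k - lam k) Filter.atTop (nhds 0) ∧
    Filter.Tendsto (fun k => fpois k (lam k)) Filter.atTop (nhds 1) :=
  stmt1_general c hc μ lam hμc hlam_pos hlam_eq
end

section
/- Let h ≥ 2 be an integer and let u_2, …, u_h be nonnegative reals with Σ_{j=2}^{h} (j−1)·u_j = t. Then u_2^{u_2} · u_3^{2u_3} · ⋯ · u_h^{(h−1)u_h} ≥ (2t / (h(h−1)))^t, with the convention 0^0 = 1. -/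
/-!
Taking logarithms, the claim is `t log (t / A) ≤ ∑ a_j u_j log u_j` with weights `a_j = j - 1`
summing to `A = h(h-1)/2`. This is Jensen's inequality for the convex function `x ↦ x log x`
with the probability weights `a_j / A`, multiplied through by `A`.
-/

open Real Finset

lemma Real.rpow_eq_exp_mul_log {x y : ℝ} (hx : 0 ≤ x) (hy : x = 0 → y = 0) :
    x ^ y = exp (y * log x) := by
  rcases hx.eq_or_lt with rfl | hx
  · simp [hy rfl]
  · rw [rpow_def_of_pos hx, mul_comm]

section WeightedEntropy

variable {ι : Type*} {s : Finset ι} {a x : ι → ℝ} {A t : ℝ}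

lemma mul_log_div_le_sum_mul_mul_log (ha : ∀ i ∈ s, 0 ≤ a i) (hx : ∀ i ∈ s, 0 ≤ x i)
    (hA : ∑ i ∈ s, a i = A) (ht : ∑ i ∈ s, a i * x i = t) :
    t * log (t / A) ≤ ∑ i ∈ s, a i * (x i * log (x i)) := by
  rcases (hA ▸ sum_nonneg ha : 0 ≤ A).eq_or_lt with rfl | hApos
  · have ha0 : ∀ i ∈ s, a i = 0 := (sum_eq_zero_iff_of_nonneg ha).mp hA
    rw [div_zero, log_zero, mul_zero]
    exact (sum_eq_zero fun i hi ↦ by rw [ha0 i hi, zero_mul]).ge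
  have hw : ∀ i ∈ s, 0 ≤ a i / A := fun i hi ↦ div_nonneg (ha i hi) hApos.le
  have hw1 : ∑ i ∈ s, a i / A = 1 := by rw [← sum_div, hA, div_self hApos.ne']
  have jensen := convexOn_mul_log.map_sum_le hw hw1 hx
  have hmean : ∑ i ∈ s, (a i / A) • x i = t / A := by
    simp only [smul_eq_mul, div_mul_eq_mul_div, ← sum_div, ht]
  rw [hmean] at jensen
  simp only [smul_eq_mul, div_mul_eq_mul_div, ← sum_div] at jensen
  exact (div_le_div_iff_of_pos_right hApos).mp jensen

lemma div_rpow_le_prod_rpow_mul_self (ha : ∀ i ∈ s, 0 ≤ a i) (hx : ∀ i ∈ s, 0 ≤ x i)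
    (hA : ∑ i ∈ s, a i = A) (ht : ∑ i ∈ s, a i * x i = t) :
    (t / A) ^ t ≤ ∏ i ∈ s, x i ^ (a i * x i) := by
  have hA0 : 0 ≤ A := hA ▸ sum_nonneg ha
  have ht0 : 0 ≤ t := ht ▸ sum_nonneg fun i hi ↦ mul_nonneg (ha i hi) (hx i hi)
  have ht_of_A : A = 0 → t = 0 := fun hA_eq ↦ by
    have ha0 : ∀ i ∈ s, a i = 0 := (sum_eq_zero_iff_of_nonneg ha).mp (hA.trans hA_eq)
    exact ht ▸ sum_eq_zero fun i hi ↦ by rw [ha0 i hi, zero_mul]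
  rw [rpow_eq_exp_mul_log (div_nonneg ht0 hA0) fun h ↦ (div_eq_zero_iff.mp h).elim id ht_of_A,
    prod_congr rfl fun i hi ↦ rpow_eq_exp_mul_log (hx i hi) fun h ↦ by rw [h, mul_zero],
    ← exp_sum, exp_le_exp]
  calc t * log (t / A) ≤ ∑ i ∈ s, a i * (x i * log (x i)) :=
        mul_log_div_le_sum_mul_mul_log ha hx hA ht
    _ = ∑ i ∈ s, a i * x i * log (x i) := by simp only [mul_assoc]

end WeightedEntropy

lemma sum_Icc_two_cast_sub_one (h : ℕ) :
    ∑ j ∈ Icc 2 h, ((j : ℝ) - 1) = h * (h - 1) / 2 := by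
  induction h with
  | zero => simp
  | succ n ih =>
    rcases n with _ | n
    · simp
    · rw [sum_Icc_succ_top (by omega), ih]
      push_cast
      ring

theorem stmt3_general (h : ℕ) (u : ℕ → ℝ)
    (hu : ∀ j ∈ Finset.Icc 2 h, 0 ≤ u j) (t : ℝ)
    (ht : ∑ j ∈ Finset.Icc 2 h, ((j : ℝ) - 1) * u j = t) :
    (2 * t / ((h : ℝ) * ((h : ℝ) - 1))) ^ t ≤
      ∏ j ∈ Finset.Icc 2 h, (u j) ^ (((j : ℝ) - 1) * u j) := by
  have hweights : ∀ j ∈ Icc 2 h, (0 : ℝ) ≤ (j : ℝ) - 1 := fun j hj ↦ by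
    have : (2 : ℝ) ≤ j := by exact_mod_cast (mem_Icc.mp hj).1
    linarith
  rw [← mul_comm t, ← div_div_eq_mul_div]
  exact div_rpow_le_prod_rpow_mul_self hweights hu (sum_Icc_two_cast_sub_one h) ht

/-- For `h ≥ 2` and nonnegative reals `u_2, …, u_h` with `∑_{j=2}^h (j−1) u_j = t`,
we have `∏_{j=2}^h u_j ^ ((j−1) u_j) ≥ (2t/(h(h−1)))^t` (real powers, `0^0 = 1`). -/
theorem stmt3 (h : ℕ) (hh : 2 ≤ h) (u : ℕ → ℝ)
    (hu : ∀ j ∈ Finset.Icc 2 h, 0 ≤ u j) (t : ℝ)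
    (ht : ∑ j ∈ Finset.Icc 2 h, ((j : ℝ) - 1) * u j = t) :
    (2 * t / ((h : ℝ) * ((h : ℝ) - 1))) ^ t ≤
      ∏ j ∈ Finset.Icc 2 h, (u j) ^ (((j : ℝ) - 1) * u j) :=
  stmt3_general h u hu t ht
end

section
/- Let H be a multihypergraph on vertex set V whose hyperedge sizes all lie between h−w+1 and h (for fixed integers h > w > 0), and let k be a positive integer. Then H has a (w,k)-orientation if and only if for every subset S ⊆ V, d(H_S) − (h−w)·e(H_S) ≤ k|S|, where H_S is the subhypergraph w-induced by S, d(H_S) is its degree sum, and e(H_S) its number of hyperedges. -/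
/-!
View an orientation as a degree-constrained subgraph of the vertex–hyperedge incidence graph:
hyperedge `i` must pick `s i = |E i| - (h - w)` of its vertices, and vertex `v` may be picked
at most `c v = k` times. The cut condition `∑ i, (s i - |E i \ S|) ≤ ∑ v ∈ S, c v`, where the
truncated subtraction of `ℕ` supplies the positive part, is necessary by double counting. It is
sufficient by Hall's theorem: each incidence `(i, v)` must be matched injectively either to a
unit of capacity of `v` or to a unit of slack `|E i| - s i` of `i`. For this `s`, the term
`s i - |E i \ S| = |E i ∩ S| - (h - w)` is positive exactly on the hyperedges of `H_S`.
-/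

open scoped Classical

open Finset

namespace HypergraphOrientation

variable {V ι : Type*} [DecidableEq V]

lemma sum_card_inter_eq_sum_card_filter_mem [Fintype ι] (O : ι → Finset V) (S : Finset V) :
    ∑ i, #(O i ∩ S) = ∑ v ∈ S, #{i | v ∈ O i} := by
  simpa [bipartiteAbove, bipartiteBelow, filter_mem_eq_inter, inter_comm] using
    sum_card_bipartiteAbove_eq_sum_card_bipartiteBelow (s := univ) (t := S) (fun i v => v ∈ O i)

theorem sum_tsub_card_sdiff_le [Fintype ι] {E O : ι → Finset V} {s : ι → ℕ} {c : V → ℕ}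
    (hOE : ∀ i, O i ⊆ E i) (hO : ∀ i, #(O i) = s i) (hc : ∀ v, #{i | v ∈ O i} ≤ c v)
    (S : Finset V) : ∑ i, (s i - #(E i \ S)) ≤ ∑ v ∈ S, c v :=
  calc ∑ i, (s i - #(E i \ S))
      ≤ ∑ i, #(O i ∩ S) := sum_le_sum fun i _ => by
        have hsplit := card_inter_add_card_sdiff (O i) S
        have hsdiff := card_le_card (sdiff_subset_sdiff (hOE i) (subset_refl S))
        have := hO i
        omega
    _ = ∑ v ∈ S, #{i | v ∈ O i} := sum_card_inter_eq_sum_card_filter_mem O S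
    _ ≤ ∑ v ∈ S, c v := sum_le_sum fun v _ => hc v

/-- An incidence `(i, v)` is matched either to one of the `c v` units of capacity of `v`
(then `v` is chosen in `i`) or to one of the `#(E i) - s i` units of slack of `i`. -/
def incidenceTargets (E : ι → Finset V) (s : ι → ℕ) (c : V → ℕ)
    (p : {p : ι × V // p.2 ∈ E p.1}) : Finset ((Σ _ : V, ℕ) ⊕ (Σ _ : ι, ℕ)) :=
  (({p.1.2} : Finset V).sigma fun v => range (c v)).disjSum
    (({p.1.1} : Finset ι).sigma fun i => range (#(E i) - s i))

lemma biUnion_incidenceTargets (E : ι → Finset V) (s : ι → ℕ) (c : V → ℕ)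
    (X : Finset {p : ι × V // p.2 ∈ E p.1}) :
    X.biUnion (incidenceTargets E s c) =
      ((X.image (·.1.2)).sigma fun v => range (c v)).disjSum
        ((X.image (·.1.1)).sigma fun i => range (#(E i) - s i)) := by
  ext (⟨v, n⟩ | ⟨i, n⟩) <;> simp [incidenceTargets]

lemma card_le_card_biUnion_incidenceTargets [Fintype ι] {E : ι → Finset V} {s : ι → ℕ}
    {c : V → ℕ} (hcut : ∀ S : Finset V, ∑ i, (s i - #(E i \ S)) ≤ ∑ v ∈ S, c v)
    (X : Finset {p : ι × V // p.2 ∈ E p.1}) :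
    #X ≤ #(X.biUnion (incidenceTargets E s c)) := by
  set S := X.image (·.1.2)
  set I := X.image (·.1.1)
  have hfiber (i : ι) : #{p ∈ X | p.1.1 = i} ≤ #(E i ∩ S) := by
    refine card_le_card_of_injOn (·.1.2) (fun p hp => ?_) (fun p hp q hq hpq => ?_)
    · obtain ⟨hpX, rfl⟩ := mem_filter.1 hp
      exact mem_inter.2 ⟨p.2, mem_image_of_mem _ hpX⟩
    · obtain ⟨-, hpi⟩ := mem_filter.1 (mem_coe.1 hp)
      obtain ⟨-, hqi⟩ := mem_filter.1 (mem_coe.1 hq)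
      exact Subtype.ext (Prod.ext (hpi.trans hqi.symm) hpq)
  rw [biUnion_incidenceTargets, card_disjSum, card_sigma, card_sigma]
  simp only [card_range]
  calc #X = ∑ i ∈ I, #{p ∈ X | p.1.1 = i} :=
        card_eq_sum_card_fiberwise fun p hp => mem_image_of_mem _ hp
    _ ≤ ∑ i ∈ I, ((s i - #(E i \ S)) + (#(E i) - s i)) := sum_le_sum fun i _ => by
        have := hfiber i
        have := card_inter_add_card_sdiff (E i) S
        omega
    _ ≤ ∑ i, (s i - #(E i \ S)) + ∑ i ∈ I, (#(E i) - s i) := by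
        rw [sum_add_distrib]
        gcongr
        exact subset_univ I
    _ ≤ ∑ v ∈ S, c v + ∑ i ∈ I, (#(E i) - s i) := by gcongr; exact hcut S

lemma le_card_of_forall_sum_tsub_card_sdiff_le [Fintype ι] {E : ι → Finset V} {s : ι → ℕ}
    {c : V → ℕ} (hcut : ∀ S : Finset V, ∑ i, (s i - #(E i \ S)) ≤ ∑ v ∈ S, c v) (i : ι) :
    s i ≤ #(E i) := by
  have hempty := hcut ∅
  simp only [sdiff_empty, sum_empty, Nat.le_zero, sum_eq_zero_iff, mem_univ, true_implies,
    Nat.sub_eq_zero_iff_le] at hempty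
  exact hempty i

section Matching

variable {E : ι → Finset V} {s : ι → ℕ} {c : V → ℕ}
  {f : {p : ι × V // p.2 ∈ E p.1} → (Σ _ : V, ℕ) ⊕ (Σ _ : ι, ℕ)}

/-- `f` as a function of two arguments, with a junk value off the incidences. -/
def matchOf (f : {p : ι × V // p.2 ∈ E p.1} → (Σ _ : V, ℕ) ⊕ (Σ _ : ι, ℕ)) (i : ι) (v : V) :
    (Σ _ : V, ℕ) ⊕ (Σ _ : ι, ℕ) :=
  if hv : v ∈ E i then f ⟨(i, v), hv⟩ else .inr ⟨i, 0⟩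

def matchedPart (f : {p : ι × V // p.2 ∈ E p.1} → (Σ _ : V, ℕ) ⊕ (Σ _ : ι, ℕ)) (i : ι) :
    Finset V :=
  {v ∈ E i | (matchOf f i v).isLeft}

lemma matchOf_mem (hft : ∀ p, f p ∈ incidenceTargets E s c p) {i : ι} {v : V} (hv : v ∈ E i) :
    (∃ n < c v, matchOf f i v = .inl ⟨v, n⟩) ∨
      ∃ n < #(E i) - s i, matchOf f i v = .inr ⟨i, n⟩ := by
  have := hft ⟨(i, v), hv⟩
  simp only [incidenceTargets, mem_disjSum, mem_sigma, mem_singleton, mem_range] at this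
  simp only [matchOf, dif_pos hv]
  grind

lemma matchOf_injective (hf : Function.Injective f) {i j : ι} {v u : V} (hv : v ∈ E i)
    (hu : u ∈ E j) (h : matchOf f i v = matchOf f j u) : i = j ∧ v = u := by
  simp only [matchOf, dif_pos hv, dif_pos hu] at h
  simpa using hf h

lemma card_sdiff_matchedPart_le (hf : Function.Injective f)
    (hft : ∀ p, f p ∈ incidenceTargets E s c p) (i : ι) :
    #(E i \ matchedPart f i) ≤ #(E i) - s i := by
  rw [matchedPart, ← filter_not]
  refine (card_le_card_of_injOn (fun v => (matchOf f i v).elim (·.2) (·.2)) (fun v hv => ?_)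
    (fun v hv u hu hvu => ?_)).trans (card_range _).le
  · obtain ⟨hv, hright⟩ := mem_filter.1 hv
    rcases matchOf_mem hft hv with ⟨n, -, hn⟩ | ⟨n, hn, hgn⟩
    · simp [hn] at hright
    · simpa [hgn] using hn
  · obtain ⟨hv, hvr⟩ := mem_filter.1 (mem_coe.1 hv)
    obtain ⟨hu, hur⟩ := mem_filter.1 (mem_coe.1 hu)
    refine (matchOf_injective hf hv hu ?_).2
    rcases matchOf_mem hft hv with ⟨n, -, hn⟩ | ⟨n, -, hn⟩ <;> [simp [hn] at hvr; skip]
    rcases matchOf_mem hft hu with ⟨n', -, hn'⟩ | ⟨n', -, hn'⟩ <;> [simp [hn'] at hur; skip]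
    simp_all

lemma card_filter_mem_matchedPart_le [Fintype ι] (hf : Function.Injective f)
    (hft : ∀ p, f p ∈ incidenceTargets E s c p) (v : V) :
    #{i | v ∈ matchedPart f i} ≤ c v := by
  refine (card_le_card_of_injOn (fun i => (matchOf f i v).elim (·.2) (·.2)) (fun i hi => ?_)
    (fun i hi j hj hij => ?_)).trans (card_range _).le
  · obtain ⟨hv, hleft⟩ := mem_filter.1 (mem_filter.1 hi).2
    rcases matchOf_mem hft hv with ⟨n, hn, hgn⟩ | ⟨n, -, hn⟩
    · simpa [hgn] using hn
    · simp [hn] at hleft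
  · obtain ⟨hv, hvl⟩ := mem_filter.1 (mem_filter.1 (mem_coe.1 hi)).2
    obtain ⟨hu, hul⟩ := mem_filter.1 (mem_filter.1 (mem_coe.1 hj)).2
    refine (matchOf_injective hf hv hu ?_).1
    rcases matchOf_mem hft hv with ⟨n, -, hn⟩ | ⟨n, -, hn⟩ <;> [skip; simp [hn] at hvl]
    rcases matchOf_mem hft hu with ⟨n', -, hn'⟩ | ⟨n', -, hn'⟩ <;> [skip; simp [hn'] at hul]
    simp_all

end Matching

theorem exists_le_card_orientation [Fintype ι] {E : ι → Finset V} {s : ι → ℕ} {c : V → ℕ}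
    (hcut : ∀ S : Finset V, ∑ i, (s i - #(E i \ S)) ≤ ∑ v ∈ S, c v) :
    ∃ O : ι → Finset V, (∀ i, O i ⊆ E i) ∧ (∀ i, s i ≤ #(O i)) ∧
      ∀ v, #{i | v ∈ O i} ≤ c v := by
  obtain ⟨f, hf, hft⟩ := (all_card_le_biUnion_card_iff_exists_injective _).1
    (card_le_card_biUnion_incidenceTargets hcut)
  have hsub (i : ι) : matchedPart f i ⊆ E i := filter_subset _ _
  refine ⟨matchedPart f, hsub, fun i => ?_, card_filter_mem_matchedPart_le hf hft⟩
  have hsplit := card_sdiff_add_card_eq_card (hsub i)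
  have hslack := card_sdiff_matchedPart_le hf hft i
  have hsE := le_card_of_forall_sum_tsub_card_sdiff_le hcut i
  omega

theorem exists_orientation_iff [Fintype ι] (E : ι → Finset V) (s : ι → ℕ) (c : V → ℕ) :
    (∃ O : ι → Finset V, (∀ i, O i ⊆ E i) ∧ (∀ i, #(O i) = s i) ∧
        ∀ v, #{i | v ∈ O i} ≤ c v) ↔
      ∀ S : Finset V, ∑ i, (s i - #(E i \ S)) ≤ ∑ v ∈ S, c v := by
  refine ⟨fun ⟨O, hOE, hO, hc⟩ => sum_tsub_card_sdiff_le hOE hO hc, fun hcut => ?_⟩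
  obtain ⟨O, hOE, hO, hc⟩ := exists_le_card_orientation hcut
  choose O' hO'O hO' using fun i => exists_subset_card_eq (hO i)
  refine ⟨O', fun i => (hO'O i).trans (hOE i), hO', fun v => (card_le_card ?_).trans (hc v)⟩
  exact monotone_filter_right _ fun i _ => @hO'O i v

lemma cast_sum_tsub_card_sdiff_eq [Fintype ι] (E : ι → Finset V) (d : ℕ) (S : Finset V) :
    ((∑ i, (#(E i) - d - #(E i \ S)) : ℕ) : ℤ) =
      ∑ i ∈ {i | d + 1 ≤ #(E i ∩ S)}, (#(E i ∩ S) : ℤ) - d * #{i | d + 1 ≤ #(E i ∩ S)} := by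
  rw [mul_comm, ← nsmul_eq_mul, ← sum_const, ← sum_sub_distrib, sum_filter, Nat.cast_sum]
  refine sum_congr rfl fun i _ => ?_
  have := card_inter_add_card_sdiff (E i) S
  split_ifs <;> omega

end HypergraphOrientation

open HypergraphOrientation

theorem stmt9_general {V ι : Type*} [Fintype V] [DecidableEq V] [Fintype ι]
    (h w k : ℕ) (hwh : w < h)
    (E : ι → Finset V)
    (hsize : ∀ i, h - w + 1 ≤ (E i).card ∧ (E i).card ≤ h) :
    (∃ O : ι → Finset V,
        (∀ i, O i ⊆ E i) ∧
        (∀ i, (O i).card + h = w + (E i).card) ∧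
        (∀ v : V, (Finset.univ.filter fun i => v ∈ O i).card ≤ k)) ↔
      ∀ S : Finset V,
        (∑ i ∈ Finset.univ.filter (fun i : ι => h - w + 1 ≤ (E i ∩ S).card),
            ((E i ∩ S).card : ℤ)) -
          ((h : ℤ) - w) *
            (Finset.univ.filter (fun i : ι => h - w + 1 ≤ (E i ∩ S).card)).card ≤
        (k : ℤ) * S.card := by
  have horient (O : ι → Finset V) :
      (∀ i, #(O i) + h = w + #(E i)) ↔ ∀ i, #(O i) = #(E i) - (h - w) :=
    forall_congr' fun i => by have := (hsize i).1; omega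
  simp_rw [horient, exists_orientation_iff, sum_const, smul_eq_mul, mul_comm _ k]
  refine forall_congr' fun S => ?_
  rw [← Nat.cast_le (α := ℤ), cast_sum_tsub_card_sdiff_eq, Nat.cast_sub hwh.le, Nat.cast_mul]

/-- Generalised Hakimi theorem.  Let `H` be a multihypergraph (hyperedges indexed by `ι`,
given as finsets `E i` of vertices) all of whose hyperedge sizes lie between `h−w+1` and
`h`.  A `(w,k)`-orientation assigns to each hyperedge of size `h−j` exactly `w−j` of its
vertices (equivalently `|O i| + h = w + |E i|`), with every vertex receiving at most `k`
positive signs.  Such an orientation exists iff for every `S ⊆ V`,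
`d(H_S) − (h−w)·e(H_S) ≤ k|S|`, where `H_S` is the subhypergraph `w`-induced by `S`. -/
theorem stmt9 {V ι : Type*} [Fintype V] [DecidableEq V] [Fintype ι]
    (h w k : ℕ) (hw : 0 < w) (hwh : w < h) (hk : 0 < k)
    (E : ι → Finset V)
    (hsize : ∀ i, h - w + 1 ≤ (E i).card ∧ (E i).card ≤ h) :
    (∃ O : ι → Finset V,
        (∀ i, O i ⊆ E i) ∧
        (∀ i, (O i).card + h = w + (E i).card) ∧
        (∀ v : V, (Finset.univ.filter fun i => v ∈ O i).card ≤ k)) ↔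
      ∀ S : Finset V,
        (∑ i ∈ Finset.univ.filter (fun i : ι => h - w + 1 ≤ (E i ∩ S).card),
            ((E i ∩ S).card : ℤ)) -
          ((h : ℤ) - w) *
            (Finset.univ.filter (fun i : ι => h - w + 1 ≤ (E i ∩ S).card)).card ≤
        (k : ℤ) * S.card :=
  stmt9_general h w k hwh E hsize
end

section
/- Let H be a multihypergraph with hyperedge sizes between h−w+1 and h, with m_{h−j} hyperedges of size h−j and n vertices. For S ⊆ V(H) define ∂*(S) = d(S) − Σ_{j=0}^{w−1} Σ_{i=w−j+1}^{h−j} (i − (w−j))·m_{h−j,i}(S), where d(S) is the degree sum of S and m_{h−j,i}(S) is the number of size-(h−j) hyperedges meeting S in exactly i vertices. Then the following are equivalent: (i) for every S ⊆ V(H), the w-density κ(H_S) of the subhypergraph w-induced by S is at most k; (ii) for every S ⊆ V(H), ∂*(S) ≥ k|S| + Σ_{j=0}^{w−1}(w−j)m_{h−j} − kn. -/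
/- Complementation: an edge `x` meeting `S` in `a` vertices and `Sᶜ` in `t = |x| - a` vertices
contributes to `∂*(S)` exactly `(w + |x| - h)` minus its contribution to `|Sᶜ| κ(H_{Sᶜ})`.
Hence `∂*(S) = ∑_j (w - j) m_{h-j} - |Sᶜ| κ(H_{Sᶜ})`, and (ii) at `S` is (i) at `Sᶜ`
after substituting `|Sᶜ| = n - |S|`. -/

/-- `|S| · κ(H_S) = d(H_S) - (h - w) e(H_S)`, written as a sum over the edges of `H`. -/
def inducedWeight {V ι : Type*} [DecidableEq V] [Fintype ι] (h w : ℕ) (E : ι → Finset V)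
    (S : Finset V) : ℤ :=
  ∑ i, if h - w + 1 ≤ (E i ∩ S).card then ((E i ∩ S).card : ℤ) - ((h : ℤ) - w) else 0

lemma Finset.sum_filter_sub_mul_card_filter {α R : Type*} [CommRing R] (s : Finset α)
    (p : α → Prop) [DecidablePred p] (f : α → R) (c : R) :
    ∑ i ∈ s.filter p, f i - c * (s.filter p).card = ∑ i ∈ s, if p i then f i - c else 0 := by
  rw [Finset.sum_filter, Finset.natCast_card_filter, Finset.mul_sum, ← Finset.sum_sub_distrib]
  refine Finset.sum_congr rfl fun i _ => ?_
  split_ifs <;> ring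

lemma edge_contribution_add_compl (h w c a t : ℕ) (hwh : w ≤ h) (hat : a + t = c) :
    (a : ℤ) - (if (w : ℤ) + c - h + 1 ≤ (a : ℤ) then (a : ℤ) - ((w : ℤ) + c - h) else 0) =
      ((w : ℤ) + c - h) - (if h - w + 1 ≤ t then (t : ℤ) - ((h : ℤ) - w) else 0) := by
  split_ifs <;> omega

lemma boundary_eq_sub_inducedWeight_compl {V ι : Type*} [Fintype V] [DecidableEq V] [Fintype ι]
    (h w : ℕ) (hwh : w ≤ h) (E : ι → Finset V) (S : Finset V) :
    (∑ i, ((E i ∩ S).card : ℤ)) -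
        ∑ i, (if (w : ℤ) + (E i).card - h + 1 ≤ ((E i ∩ S).card : ℤ) then
          ((E i ∩ S).card : ℤ) - ((w : ℤ) + (E i).card - h) else 0) =
      (∑ i, ((w : ℤ) + (E i).card - h)) - inducedWeight h w E Sᶜ := by
  rw [inducedWeight, ← Finset.sum_sub_distrib, ← Finset.sum_sub_distrib]
  refine Finset.sum_congr rfl fun i _ => edge_contribution_add_compl h w _ _ _ hwh ?_
  rw [← Finset.sdiff_eq_inter_compl, Finset.card_inter_add_card_sdiff]

lemma forall_le_mul_card_iff_forall_compl {V : Type*} [Fintype V] [DecidableEq V]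
    (f : Finset V → ℤ) (k M : ℤ) :
    (∀ S : Finset V, f S ≤ k * S.card) ↔
      ∀ S : Finset V, k * S.card + M - k * Fintype.card V ≤ M - f Sᶜ := by
  have hcard (S : Finset V) : (Sᶜ.card : ℤ) = Fintype.card V - S.card := by
    rw [Finset.card_compl, Nat.cast_sub S.card_le_univ]
  constructor
  · intro H S
    have := H Sᶜ
    rw [hcard] at this
    linarith [mul_sub k (Fintype.card V : ℤ) S.card]
  · intro H S
    have := H Sᶜ
    rw [compl_compl, hcard] at this
    linarith [mul_sub k (Fintype.card V : ℤ) S.card]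

theorem stmt10_general {V ι : Type*} [Fintype V] [DecidableEq V] [Fintype ι]
    (h w k : ℕ) (hwh : w < h)
    (E : ι → Finset V) :
    ((∀ S : Finset V,
        (∑ i ∈ Finset.univ.filter (fun i : ι => h - w + 1 ≤ (E i ∩ S).card),
            ((E i ∩ S).card : ℤ)) -
          ((h : ℤ) - w) *
            (Finset.univ.filter (fun i : ι => h - w + 1 ≤ (E i ∩ S).card)).card ≤
        (k : ℤ) * S.card) ↔
      (∀ S : Finset V,
        (k : ℤ) * S.card + (∑ i : ι, ((w : ℤ) + (E i).card - h)) -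
            (k : ℤ) * (Fintype.card V) ≤
          (∑ i : ι, ((E i ∩ S).card : ℤ)) -
            ∑ i : ι,
              (if (w : ℤ) + (E i).card - h + 1 ≤ ((E i ∩ S).card : ℤ) then
                ((E i ∩ S).card : ℤ) - ((w : ℤ) + (E i).card - h)
              else 0))) := by
  simp only [Finset.sum_filter_sub_mul_card_filter,
    boundary_eq_sub_inducedWeight_compl h w hwh.le E]
  exact forall_le_mul_card_iff_forall_compl (inducedWeight h w E) (k : ℤ)
    (∑ i, ((w : ℤ) + (E i).card - h))

/-- Let `H` be a multihypergraph with hyperedge sizes between `h−w+1` and `h`.  For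
`S ⊆ V` let `∂*(S) = d(S) − ∑_edges (|x∩S| − (w−j))⁺` (counting only edges of size `h−j`
with `|x∩S| ≥ w−j+1`, where `w−j = w + |x| − h`).  Then the following are equivalent:
(i) for every `S`, the `w`-density of the subhypergraph `w`-induced by `S` is at most `k`,
i.e. `d(H_S) − (h−w)·e(H_S) ≤ k|S|`; (ii) for every `S`,
`∂*(S) ≥ k|S| + ∑_j (w−j) m_{h−j} − k n`. -/
theorem stmt10 {V ι : Type*} [Fintype V] [DecidableEq V] [Fintype ι]
    (h w k : ℕ) (hw : 0 < w) (hwh : w < h)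
    (E : ι → Finset V)
    (hsize : ∀ i, h - w + 1 ≤ (E i).card ∧ (E i).card ≤ h) :
    ((∀ S : Finset V,
        (∑ i ∈ Finset.univ.filter (fun i : ι => h - w + 1 ≤ (E i ∩ S).card),
            ((E i ∩ S).card : ℤ)) -
          ((h : ℤ) - w) *
            (Finset.univ.filter (fun i : ι => h - w + 1 ≤ (E i ∩ S).card)).card ≤
        (k : ℤ) * S.card) ↔
      (∀ S : Finset V,
        (k : ℤ) * S.card + (∑ i : ι, ((w : ℤ) + (E i).card - h)) -
            (k : ℤ) * (Fintype.card V) ≤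
          (∑ i : ι, ((E i ∩ S).card : ℤ)) -
            ∑ i : ι,
              (if (w : ℤ) + (E i).card - h + 1 ≤ ((E i ∩ S).card : ℤ) then
                ((E i ∩ S).card : ℤ) - ((w : ℤ) + (E i).card - h)
              else 0))) :=
  stmt10_general h w k hwh E
end

section
/- Let H be a multihypergraph with hyperedge sizes between h−w+1 and h, n vertices, and m_{h−j} hyperedges of size h−j, with Σ_{j}(w−j)m_{h−j} ≤ kn. Suppose some S ⊆ V(H) satisfies ∂*(S) < k|S| + Σ_{j=0}^{w−1}(w−j)m_{h−j} − kn. Then the number of hyperedges x with |x ∩ (V∖S)| ≥ 2 is strictly greater than k·|V∖S|/w. -/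
/-!
Write `a = w + |e| - h ∈ [1, w]` for the weight of a hyperedge `e` and `s = |e ∩ S|`. The
contribution of `e` to `Σ a - ∂*(S)` is `a - s + (s - a)⁺ = (a - s)⁺`, which is at most `w`,
and vanishes when `e` meets `V ∖ S` in at most one vertex: then `s ≥ |e| - 1 ≥ a` because
`w < h`. Summing over all hyperedges, `Σ a - ∂*(S) ≤ w · #{e : |e ∖ S| ≥ 2}`, and the hypothesis
on `S` says exactly that the left side exceeds `k (n - |S|) = k |V ∖ S|`.
-/

open Finset

lemma weight_sub_card_inter_add_excess_le {V : Type*} [DecidableEq V] {h w : ℕ} (hwh : w < h)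
    {e : Finset V} (he : #e ≤ h) (S : Finset V) :
    ((w : ℤ) + #e - h) - #(e ∩ S) +
        (if (w : ℤ) + #e - h + 1 ≤ #(e ∩ S) then (#(e ∩ S) : ℤ) - ((w : ℤ) + #e - h) else 0) ≤
      if 2 ≤ #(e \ S) then (w : ℤ) else 0 := by
  have hsplit := card_inter_add_card_sdiff e S
  split_ifs <;> omega

theorem stmt11_general {V ι : Type*} [Fintype V] [DecidableEq V] [Fintype ι]
    (h w k : ℕ) (hwh : w < h)
    (E : ι → Finset V)
    (hsize : ∀ i, h - w + 1 ≤ (E i).card ∧ (E i).card ≤ h)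
    (S : Finset V)
    (hS : (∑ i : ι, ((E i ∩ S).card : ℤ)) -
        (∑ i : ι,
          (if (w : ℤ) + (E i).card - h + 1 ≤ ((E i ∩ S).card : ℤ) then
            ((E i ∩ S).card : ℤ) - ((w : ℤ) + (E i).card - h)
          else 0)) <
      (k : ℤ) * S.card + (∑ i : ι, ((w : ℤ) + (E i).card - h)) -
        (k : ℤ) * (Fintype.card V)) :
    (k : ℤ) * (Sᶜ : Finset V).card <
      (w : ℤ) * (Finset.univ.filter (fun i : ι => 2 ≤ (E i ∩ Sᶜ).card)).card := by
  have hsum := sum_le_sum fun i (_ : i ∈ univ) =>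
    weight_sub_card_inter_add_excess_le hwh (hsize i).2 S
  have hcount : ∑ i, (if 2 ≤ #(E i \ S) then (w : ℤ) else 0) = w * #{i | 2 ≤ #(E i ∩ Sᶜ)} := by
    rw [← sum_filter, sum_const, nsmul_eq_mul, mul_comm]
    simp only [sdiff_eq_inter_compl]
  rw [sum_add_distrib, sum_sub_distrib, hcount] at hsum
  have hcompl : ((Sᶜ).card : ℤ) = Fintype.card V - S.card := by
    rw [card_compl, Nat.cast_sub (card_le_univ S)]
  rw [hcompl]
  linarith

/-- Let `H` be a multihypergraph with hyperedge sizes between `h−w+1` and `h` satisfying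
`∑_j (w−j) m_{h−j} ≤ k n`.  If some `S ⊆ V` satisfies
`∂*(S) < k|S| + ∑_j (w−j) m_{h−j} − k n`, then the number of hyperedges partially
contained in `V∖S` (i.e. meeting `V∖S` in at least two vertices) is strictly greater
than `k·|V∖S|/w`. -/
theorem stmt11 {V ι : Type*} [Fintype V] [DecidableEq V] [Fintype ι]
    (h w k : ℕ) (hw : 0 < w) (hwh : w < h)
    (E : ι → Finset V)
    (hsize : ∀ i, h - w + 1 ≤ (E i).card ∧ (E i).card ≤ h)
    (htotal : (∑ i : ι, ((w : ℤ) + (E i).card - h)) ≤ (k : ℤ) * (Fintype.card V))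
    (S : Finset V)
    (hS : (∑ i : ι, ((E i ∩ S).card : ℤ)) -
        (∑ i : ι,
          (if (w : ℤ) + (E i).card - h + 1 ≤ ((E i ∩ S).card : ℤ) then
            ((E i ∩ S).card : ℤ) - ((w : ℤ) + (E i).card - h)
          else 0)) <
      (k : ℤ) * S.card + (∑ i : ι, ((w : ℤ) + (E i).card - h)) -
        (k : ℤ) * (Fintype.card V)) :
    (k : ℤ) * (Sᶜ : Finset V).card <
      (w : ℤ) * (Finset.univ.filter (fun i : ι => 2 ≤ (E i ∩ Sᶜ).card)).card :=
  stmt11_general h w k hwh E hsize S hS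
end

section
/- Let H be a multihypergraph with hyperedge sizes between h−w+1 and h, n vertices, and m_{h−j} hyperedges of size h−j, with Σ_j (w−j)m_{h−j} ≤ kn. Suppose S ⊆ V(H) satisfies ∂*(S) < k|S| + Σ_{j=0}^{w−1}(w−j)m_{h−j} − kn. Then: (a) the number of hyperedges intersecting S is strictly less than k|S|; and (b) (h−w) times the number of hyperedges meeting S in at least 2 vertices is strictly greater than d(S) − k|S|, where d(S) is the degree sum of S. -/
/-!
Write `a = |e ∩ S|` and `c = w + |e| - h ≥ 1` for a hyperedge `e`; the term subtracted from
`d(S)` in `∂*(S)` is `t = a - c` when `a > c` and `0` otherwise, so `a - t = min a c`.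
Since `c ≥ 1`, `min a c ≥ 1` as soon as `e` meets `S`, whence `ν(S) ≤ ∂*(S)`; and since
`a ≤ |e| = c + (h - w)`, `t ≤ h - w`, with `t = 0` when `a ≤ 1`, whence `∑ t ≤ (h - w) ρ(S)`.
Both parts then follow from the hypothesis on `∂*(S)` and `∑_j (w - j) m_{h-j} ≤ k n`.
-/

namespace Finset

variable {ι : Type*} (s : Finset ι) (a : ι → ℕ) (c : ι → ℤ)

theorem card_filter_one_le_le_sum_sub_sum_ite (hc : ∀ i, 1 ≤ c i) :
    ((s.filter fun i => 1 ≤ a i).card : ℤ) ≤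
      ∑ i ∈ s, (a i : ℤ) - ∑ i ∈ s, (if c i + 1 ≤ (a i : ℤ) then (a i : ℤ) - c i else 0) := by
  rw [card_filter, ← sum_sub_distrib]
  push_cast
  refine sum_le_sum fun i _ => ?_
  have := hc i
  split_ifs <;> omega

theorem sum_ite_le_mul_card_filter_two_le {d : ℤ} (hd : 0 ≤ d) (hc : ∀ i, 1 ≤ c i)
    (hac : ∀ i, (a i : ℤ) ≤ c i + d) :
    ∑ i ∈ s, (if c i + 1 ≤ (a i : ℤ) then (a i : ℤ) - c i else 0) ≤
      d * (s.filter fun i => 2 ≤ a i).card := by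
  rw [card_filter, Nat.cast_sum, mul_sum]
  refine sum_le_sum fun i _ => ?_
  have := hc i
  have := hac i
  split_ifs <;> push_cast <;> omega

end Finset

theorem stmt12_general {V ι : Type*} [Fintype V] [DecidableEq V] [Fintype ι]
    (h w k : ℕ) (hwh : w < h)
    (E : ι → Finset V)
    (hsize : ∀ i, h - w + 1 ≤ (E i).card ∧ (E i).card ≤ h)
    (htotal : (∑ i : ι, ((w : ℤ) + (E i).card - h)) ≤ (k : ℤ) * (Fintype.card V))
    (S : Finset V)
    (hS : (∑ i : ι, ((E i ∩ S).card : ℤ)) -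
        (∑ i : ι,
          (if (w : ℤ) + (E i).card - h + 1 ≤ ((E i ∩ S).card : ℤ) then
            ((E i ∩ S).card : ℤ) - ((w : ℤ) + (E i).card - h)
          else 0)) <
      (k : ℤ) * S.card + (∑ i : ι, ((w : ℤ) + (E i).card - h)) -
        (k : ℤ) * (Fintype.card V)) :
    ((Finset.univ.filter (fun i : ι => 1 ≤ (E i ∩ S).card)).card : ℤ) < (k : ℤ) * S.card ∧
    (∑ i : ι, ((E i ∩ S).card : ℤ)) - (k : ℤ) * S.card <
      ((h : ℤ) - w) * (Finset.univ.filter (fun i : ι => 2 ≤ (E i ∩ S).card)).card := by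
  have hexcess : ∀ i, 1 ≤ (w : ℤ) + (E i).card - h := fun i => by
    have := (hsize i).1
    omega
  have hoverlap : ∀ i, ((E i ∩ S).card : ℤ) ≤ ((w : ℤ) + (E i).card - h) + ((h : ℤ) - w) :=
    fun i => by
      have := Finset.card_le_card (Finset.inter_subset_left (s₁ := E i) (s₂ := S))
      omega
  have hν := Finset.card_filter_one_le_le_sum_sub_sum_ite Finset.univ
    (fun i => (E i ∩ S).card) _ hexcess
  have hρ := Finset.sum_ite_le_mul_card_filter_two_le Finset.univ
    (fun i => (E i ∩ S).card) _ (by omega) hexcess hoverlap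
  exact ⟨by linarith, by linarith⟩

/-- Let `H` be a multihypergraph with hyperedge sizes between `h−w+1` and `h` satisfying
`∑_j (w−j) m_{h−j} ≤ k n`.  If some `S ⊆ V` satisfies
`∂*(S) < k|S| + ∑_j (w−j) m_{h−j} − k n`, then (a) the number `ν(S)` of hyperedges
intersecting `S` is strictly less than `k|S|`, and (b) `(h−w)·ρ(S) > d(S) − k|S|`,
where `ρ(S)` is the number of hyperedges meeting `S` in at least two vertices and
`d(S)` the degree sum of `S`. -/
theorem stmt12 {V ι : Type*} [Fintype V] [DecidableEq V] [Fintype ι]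
    (h w k : ℕ) (hw : 0 < w) (hwh : w < h)
    (E : ι → Finset V)
    (hsize : ∀ i, h - w + 1 ≤ (E i).card ∧ (E i).card ≤ h)
    (htotal : (∑ i : ι, ((w : ℤ) + (E i).card - h)) ≤ (k : ℤ) * (Fintype.card V))
    (S : Finset V)
    (hS : (∑ i : ι, ((E i ∩ S).card : ℤ)) -
        (∑ i : ι,
          (if (w : ℤ) + (E i).card - h + 1 ≤ ((E i ∩ S).card : ℤ) then
            ((E i ∩ S).card : ℤ) - ((w : ℤ) + (E i).card - h)
          else 0)) <
      (k : ℤ) * S.card + (∑ i : ι, ((w : ℤ) + (E i).card - h)) -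
        (k : ℤ) * (Fintype.card V)) :
    ((Finset.univ.filter (fun i : ι => 1 ≤ (E i ∩ S).card)).card : ℤ) < (k : ℤ) * S.card ∧
    (∑ i : ι, ((E i ∩ S).card : ℤ)) - (k : ℤ) * S.card <
      ((h : ℤ) - w) * (Finset.univ.filter (fun i : ι => 2 ≤ (E i ∩ S).card)).card :=
  stmt12_general h w k hwh E hsize htotal S hS
end

section
/- Let H be a graph-like random pairing: D balls are partitioned into m₂ = D/2 pairs uniformly at random after being allocated into n bins with exactly q balls in a fixed bin-set S (each bin containing at least k+1 balls). If q < D/2, then the probability that at least t pairs have both balls in S is at most ((e·q)/(2t) · (q/D))^t. -/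
/-! A perfect matching of `2m` balls is a fixed-point-free involution of `Fin (2m)`; there are
`(2m - 1)‼` of them, since the partner of a fixed ball can be chosen in `2m - 1` ways. If at
least `t` pairs lie inside `T`, then some `2t`-subset of `T` is matched within itself, so the
event is covered by the `C(q, 2t) (2t - 1)‼` matchings `μ` of such subsets, each extending to
`(2(m - t) - 1)‼` perfect matchings. The resulting ratio equals
`q^(2t, falling) / (2^t t! ∏_{j<t} (2m - 2j - 1))`; pairing the factors gives at most
`q^(2t) / (2^t t! (2m)^t)` because `q ≤ 2m`, and `t! ≥ (t / e)^t` finishes. -/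

open scoped Classical

open Finset Function Equiv
open scoped Nat

namespace PairingModel

section Pairings

variable {α : Type*} [DecidableEq α]

theorem exists_invariant_subset_card_eq {π : Perm α} (hπ : Involutive π) {A : Finset α}
    (hA : ∀ x ∈ A, π x ∈ A) (hfix : ∀ x ∈ A, π x ≠ x) {t : ℕ} (ht : 2 * t ≤ A.card) :
    ∃ s ⊆ A, s.card = 2 * t ∧ ∀ x ∈ s, π x ∈ s := by
  induction t with
  | zero => exact ⟨∅, empty_subset A, rfl, by simp⟩
  | succ t ih =>
    obtain ⟨s, hsA, hs, hsπ⟩ := ih (by omega)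
    obtain ⟨a, haA, has⟩ : ∃ a ∈ A, a ∉ s := by
      by_contra! h
      have := card_le_card (show A ⊆ s from h)
      omega
    have hπas : π a ∉ s := fun h => has (hπ a ▸ hsπ _ h)
    have hπa : a ≠ π a := (hfix a haA).symm
    refine ⟨insert a (insert (π a) s), ?_, ?_, ?_⟩
    · exact insert_subset haA (insert_subset (hA a haA) hsA)
    · rw [card_insert_of_notMem (by simp [hπa, has]), card_insert_of_notMem hπas, hs]; omega
    · simp only [mem_insert, forall_eq_or_imp, hπ a, true_or, or_true, true_and]
      exact fun x hx => Or.inr (Or.inr (hsπ x hx))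

variable [Fintype α]

/-- Perfect matchings of `s`, encoded as the involutions whose support is exactly `s`. -/
noncomputable def pairings (s : Finset α) : Finset (Perm α) :=
  univ.filter fun π => Involutive π ∧ π.support = s

theorem mem_pairings {s : Finset α} {π : Perm α} :
    π ∈ pairings s ↔ Involutive π ∧ π.support = s := by
  simp [pairings]

theorem mem_pairings_univ {π : Perm α} :
    π ∈ pairings univ ↔ (∀ i, π (π i) = i) ∧ ∀ i, π i ≠ i := by
  simp [mem_pairings, Involutive, eq_univ_iff_forall]

theorem pairings_empty : pairings (∅ : Finset α) = {1} := by
  ext π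
  simp only [mem_pairings, Perm.support_eq_empty_iff, mem_singleton, and_iff_right_iff_imp]
  rintro rfl
  exact fun _ => rfl

theorem swap_mem_pairings {a b : α} (hab : a ≠ b) : swap a b ∈ pairings {a, b} :=
  mem_pairings.2 ⟨swap_apply_self a b, Perm.support_swap hab⟩

theorem card_filter_eqOn_pairings {s u : Finset α} {μ : Perm α} (hμ : μ ∈ pairings s)
    (hsu : s ⊆ u) :
    ((pairings u).filter fun π => ∀ x ∈ s, π x = μ x).card = (pairings (u \ s)).card := by
  obtain ⟨hμinv, hμs⟩ := mem_pairings.1 hμ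
  have hμμ : μ * μ = 1 := Perm.ext hμinv
  have hμmem : ∀ {x}, μ x ∈ s ↔ x ∈ s := by rw [← hμs]; exact Perm.apply_mem_support
  have hμfix : ∀ {x}, x ∉ s → μ x = x := fun hx => Perm.notMem_support.1 (hμs ▸ hx)
  refine card_nbij' (· * μ) (· * μ) ?_ ?_ ?_ ?_
  · intro π hπ
    rw [mem_coe, mem_filter, mem_pairings] at hπ
    obtain ⟨⟨hπinv, hπu⟩, hπμ⟩ := hπ
    have hπs : ∀ x, x ∉ s → π x ∉ s := fun x hx h =>
      hx (hπinv x ▸ hπμ _ h ▸ hμmem.2 h)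
    have happ : ∀ x, (π * μ) x = if x ∈ s then x else π x := by
      intro x
      split_ifs with hx
      · rw [Perm.mul_apply, hπμ _ (hμmem.2 hx), hμinv]
      · rw [Perm.mul_apply, hμfix hx]
    rw [mem_coe, mem_pairings]
    refine ⟨fun x => ?_, ?_⟩
    · by_cases hx : x ∈ s
      · simp [happ, hx]
      · simp [happ, hx, hπs x hx, hπinv x]
    · ext x
      by_cases hx : x ∈ s
      · simp [happ, hx]
      · simp [Perm.mem_support, happ, hx, ← hπu]
  · intro σ hσ
    rw [mem_coe, mem_pairings] at hσ
    obtain ⟨hσinv, hσs⟩ := hσ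
    have hdisj : Perm.Disjoint σ μ := by
      rw [Perm.disjoint_iff_disjoint_support, hσs, hμs]
      exact sdiff_disjoint
    rw [mem_coe, mem_filter, mem_pairings]
    refine ⟨⟨fun x => ?_, ?_⟩, fun x hx => ?_⟩
    · have hsq : σ * μ * (σ * μ) = 1 := by
        rw [hdisj.symm.commute.mul_mul_mul_comm, (Perm.ext hσinv : σ * σ = 1), hμμ, mul_one]
      exact Perm.ext_iff.1 hsq x
    · rw [hdisj.support_mul, hσs, hμs, sdiff_union_of_subset hsu]
    · refine Perm.notMem_support.1 (?_ : μ x ∉ σ.support)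
      rw [hσs, mem_sdiff, not_and_not_right]
      exact fun _ => hμmem.2 hx
  · intro π _
    simp only [mul_assoc, hμμ, mul_one]
  · intro σ _
    simp only [mul_assoc, hμμ, mul_one]

/-- `(2k - 1)‼` is `1` for `k = 0` (truncated subtraction), matching the empty matching. -/
theorem card_pairings {k : ℕ} {s : Finset α} (hs : s.card = 2 * k) :
    (pairings s).card = (2 * k - 1)‼ := by
  induction k generalizing s with
  | zero => rw [card_eq_zero.1 hs, pairings_empty, card_singleton]; rfl
  | succ k ih =>
    obtain ⟨a, ha⟩ : s.Nonempty := card_pos.1 (by omega)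
    have hmaps : ∀ π ∈ pairings s, π a ∈ s.erase a := by
      intro π hπ
      obtain ⟨-, hπs⟩ := mem_pairings.1 hπ
      have ha' : a ∈ π.support := hπs ▸ ha
      exact mem_erase.2 ⟨Perm.mem_support.1 ha', hπs ▸ Perm.apply_mem_support.2 ha'⟩
    have hfiber : ∀ b ∈ s.erase a, ((pairings s).filter fun π => π a = b).card = (2 * k - 1)‼ := by
      intro b hb
      obtain ⟨hba, hb⟩ := mem_erase.1 hb
      have hpair : (pairings s).filter (fun π => π a = b) =
          (pairings s).filter fun π => ∀ x ∈ ({a, b} : Finset α), π x = swap a b x := by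
        refine filter_congr fun π hπ => ?_
        have hπinv := (mem_pairings.1 hπ).1
        simp only [mem_insert, mem_singleton, forall_eq_or_imp, forall_eq, swap_apply_left,
          swap_apply_right, iff_self_and]
        exact fun h => h ▸ hπinv a
      have hsub : {a, b} ⊆ s := insert_subset ha (singleton_subset_iff.2 hb)
      rw [hpair, card_filter_eqOn_pairings (swap_mem_pairings hba.symm) hsub]
      apply ih
      rw [card_sdiff_of_subset hsub, card_pair hba.symm, hs]
      omega
    rw [card_eq_sum_card_fiberwise hmaps, sum_congr rfl hfiber, sum_const, card_erase_of_mem ha,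
      hs, smul_eq_mul, show 2 * (k + 1) - 1 = 2 * k + 1 by omega, Nat.doubleFactorial_add_one]

theorem exists_mem_pairings_eqOn {π : Perm α} (hπ : Involutive π) {s : Finset α}
    (hs : ∀ x ∈ s, π x ∈ s) (hfix : ∀ x ∈ s, π x ≠ x) :
    ∃ μ ∈ pairings s, ∀ x ∈ s, π x = μ x := by
  have hμ : Involutive (s.piecewise π id) := by
    intro x
    by_cases hx : x ∈ s
    · simp [hx, hs x hx, hπ x]
    · simp [hx]
  refine ⟨hμ.toPerm, mem_pairings.2 ⟨hμ, ?_⟩, fun x hx => by simp [hx]⟩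
  ext x
  by_cases hx : x ∈ s
  · simp [hx, hfix x hx]
  · simp [hx]

/-- The union bound over the partial matchings of `T` with `t` pairs. -/
theorem card_filter_pairs_within_le {m : ℕ} (hα : Fintype.card α = 2 * m) (T : Finset α)
    (t : ℕ) :
    ((pairings (univ : Finset α)).filter fun π =>
        2 * t ≤ (univ.filter fun i => i ∈ T ∧ π i ∈ T).card).card ≤
      T.card.choose (2 * t) * (2 * t - 1)‼ * (2 * (m - t) - 1)‼ := by
  have hcover : ((pairings (univ : Finset α)).filter fun π =>
        2 * t ≤ (univ.filter fun i => i ∈ T ∧ π i ∈ T).card) ⊆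
      (T.powersetCard (2 * t)).biUnion fun s => (pairings s).biUnion fun μ =>
        (pairings univ).filter fun π => ∀ x ∈ s, π x = μ x := by
    intro π hπ
    obtain ⟨hπ, ht⟩ := mem_filter.1 hπ
    obtain ⟨hπinv, hπsupp⟩ := mem_pairings.1 hπ
    have hfix : ∀ x, π x ≠ x := fun x => Perm.mem_support.1 (hπsupp ▸ mem_univ x)
    obtain ⟨s, hsA, hs, hsπ⟩ := exists_invariant_subset_card_eq hπinv
      (A := univ.filter fun i => i ∈ T ∧ π i ∈ T)
      (fun x hx => by simp only [mem_filter, mem_univ, true_and, hπinv x] at hx ⊢; exact hx.symm)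
      (fun x _ => hfix x) ht
    obtain ⟨μ, hμ, hπμ⟩ := exists_mem_pairings_eqOn hπinv hsπ fun x _ => hfix x
    simp only [mem_biUnion, mem_powersetCard, mem_filter]
    exact ⟨s, ⟨fun x hx => (mem_filter.1 (hsA hx)).2.1, hs⟩, μ, hμ, hπ, hπμ⟩
  have hext : ∀ s ∈ T.powersetCard (2 * t), ∀ μ ∈ pairings s,
      ((pairings univ).filter fun π => ∀ x ∈ s, π x = μ x).card = (2 * (m - t) - 1)‼ := by
    intro s hs μ hμ
    rw [card_filter_eqOn_pairings hμ (subset_univ s), card_pairings]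
    rw [← compl_eq_univ_sdiff, card_compl, hα, (mem_powersetCard.1 hs).2]
    omega
  calc _ ≤ _ := card_le_card hcover
    _ ≤ ∑ s ∈ T.powersetCard (2 * t), ∑ μ ∈ pairings s,
          ((pairings univ).filter fun π => ∀ x ∈ s, π x = μ x).card :=
        card_biUnion_le.trans (sum_le_sum fun _ _ => card_biUnion_le)
    _ = ∑ s ∈ T.powersetCard (2 * t), (2 * t - 1)‼ * (2 * (m - t) - 1)‼ := by
        refine sum_congr rfl fun s hs => ?_
        rw [sum_congr rfl (hext s hs), sum_const, card_pairings (mem_powersetCard.1 hs).2,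
          smul_eq_mul]
    _ = _ := by rw [sum_const, card_powersetCard, smul_eq_mul, mul_assoc]

end Pairings

theorem sub_mul_le_mul_sub {q D : ℕ} (s : ℕ) (h : q ≤ D) : (q - s) * D ≤ q * (D - s) := by
  rw [Nat.sub_mul, Nat.mul_sub, mul_comm q s]
  exact Nat.sub_le_sub_left (Nat.mul_le_mul_left s h) _

theorem factorial_two_mul (t : ℕ) : (2 * t)! = 2 ^ t * t ! * (2 * t - 1)‼ := by
  cases t with
  | zero => rfl
  | succ t =>
    rw [show 2 * (t + 1) = (2 * t + 1) + 1 by ring, Nat.factorial_eq_mul_doubleFactorial,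
      show 2 * t + 1 + 1 = 2 * (t + 1) by ring, Nat.doubleFactorial_two_mul]
    rfl

/-- Choosing the pairs one at a time, a pair inside a `q`-set out of `2m` balls costs
`(q - 2j)(q - 2j - 1) / (2m - 2j - 1) ≤ q² / (2m)`. -/
theorem descFactorial_mul_pow_mul_doubleFactorial_le {q m : ℕ} (hq : q ≤ 2 * m) (t : ℕ) :
    q.descFactorial (2 * t) * (2 * m) ^ t * (2 * (m - t) - 1)‼ ≤ q ^ (2 * t) * (2 * m - 1)‼ := by
  induction t with
  | zero => simp
  | succ t ih =>
    rcases lt_or_ge m (t + 1) with hm | hm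
    · rw [Nat.descFactorial_eq_zero_iff_lt.2 (by omega)]
      simp
    have hstep : (2 * (m - t) - 1)‼ = (2 * m - (2 * t + 1)) * (2 * (m - (t + 1)) - 1)‼ := by
      rw [show 2 * (m - t) - 1 = 2 * (m - (t + 1)) + 1 by omega, Nat.doubleFactorial_add_one]
      congr 1
      omega
    have hpair : (q - (2 * t + 1)) * (q - 2 * t) * (2 * m) ≤ q ^ 2 * (2 * m - (2 * t + 1)) := by
      calc (q - (2 * t + 1)) * (q - 2 * t) * (2 * m)
          = (q - 2 * t) * ((q - (2 * t + 1)) * (2 * m)) := by ring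
        _ ≤ q * (q * (2 * m - (2 * t + 1))) :=
            Nat.mul_le_mul (Nat.sub_le q _) (sub_mul_le_mul_sub _ hq)
        _ = q ^ 2 * (2 * m - (2 * t + 1)) := by ring
    calc q.descFactorial (2 * (t + 1)) * (2 * m) ^ (t + 1) * (2 * (m - (t + 1)) - 1)‼
        = (q - (2 * t + 1)) * (q - 2 * t) * (2 * m) *
            (q.descFactorial (2 * t) * (2 * m) ^ t * (2 * (m - (t + 1)) - 1)‼) := by
          rw [show 2 * (t + 1) = 2 * t + 1 + 1 by ring, Nat.descFactorial_succ,
            Nat.descFactorial_succ, pow_succ]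
          ring
      _ ≤ q ^ 2 * (2 * m - (2 * t + 1)) *
            (q.descFactorial (2 * t) * (2 * m) ^ t * (2 * (m - (t + 1)) - 1)‼) := by
          gcongr
      _ = q ^ 2 * (q.descFactorial (2 * t) * (2 * m) ^ t * (2 * (m - t) - 1)‼) := by
          rw [hstep]; ring
      _ ≤ q ^ 2 * (q ^ (2 * t) * (2 * m - 1)‼) := by gcongr
      _ = q ^ (2 * (t + 1)) * (2 * m - 1)‼ := by ring

theorem pow_le_exp_pow_mul_factorial (t : ℕ) : (t : ℝ) ^ t ≤ Real.exp 1 ^ t * t ! := by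
  rw [Real.exp_one_pow, ← div_le_iff₀ (by positivity)]
  exact Real.pow_div_factorial_le_exp _ t.cast_nonneg t

theorem choose_mul_doubleFactorial_div_le {q m : ℕ} (hq : q ≤ 2 * m) (t : ℕ) :
    (q.choose (2 * t) * (2 * t - 1)‼ * (2 * (m - t) - 1)‼ : ℝ) / (2 * m - 1)‼ ≤
      ((Real.exp 1 * q) / (2 * t) * (q / (2 * m))) ^ t := by
  have hZ : (0 : ℝ) < (2 * m - 1)‼ := by exact_mod_cast Nat.doubleFactorial_pos _
  rcases t.eq_zero_or_pos with rfl | ht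
  · simp [hZ.ne']
  rcases lt_or_ge q (2 * t) with hqt | hqt
  · simp only [Nat.choose_eq_zero_of_lt hqt, Nat.cast_zero, zero_mul, zero_div]
    positivity
  have hm : (0 : ℝ) < m := by exact_mod_cast (show 0 < m by omega)
  have hX : (q.choose (2 * t) * (2 * t - 1)‼ : ℝ) * (2 ^ t * t !) = q.descFactorial (2 * t) := by
    rw [Nat.descFactorial_eq_factorial_mul_choose, factorial_two_mul]
    push_cast
    ring
  have hK : (q.descFactorial (2 * t) * (2 * m) ^ t * (2 * (m - t) - 1)‼ : ℝ) ≤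
      q ^ (2 * t) * (2 * m - 1)‼ := by
    exact_mod_cast descFactorial_mul_pow_mul_doubleFactorial_le hq t
  have hS := pow_le_exp_pow_mul_factorial t
  have hR : ((Real.exp 1 * q) / (2 * t) * (q / (2 * m))) ^ t =
      Real.exp 1 ^ t * q ^ (2 * t) / ((2 * t) ^ t * (2 * m) ^ t) := by
    rw [div_mul_div_comm, div_pow, mul_pow, mul_pow, mul_assoc, ← sq, ← pow_mul, mul_pow,
      mul_comm 2 t]
  rw [div_le_iff₀ hZ, hR, div_mul_eq_mul_div, le_div_iff₀ (by positivity)]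
  calc (q.choose (2 * t) * (2 * t - 1)‼ * (2 * (m - t) - 1)‼ : ℝ) * ((2 * t) ^ t * (2 * m) ^ t)
      = (q.choose (2 * t) * (2 * t - 1)‼ * 2 ^ t * (2 * (m - t) - 1)‼ * (2 * m) ^ t) * t ^ t := by
        ring
    _ ≤ (q.choose (2 * t) * (2 * t - 1)‼ * 2 ^ t * (2 * (m - t) - 1)‼ * (2 * m) ^ t) *
          (Real.exp 1 ^ t * t !) := by gcongr
    _ = Real.exp 1 ^ t * (q.descFactorial (2 * t) * (2 * m) ^ t * (2 * (m - t) - 1)‼) := by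
        rw [← hX]; ring
    _ ≤ Real.exp 1 ^ t * (q ^ (2 * t) * (2 * m - 1)‼) := by gcongr
    _ = _ := by ring

end PairingModel

open PairingModel

theorem stmt17_general (D m₂ q t : ℕ) (hD : D = 2 * m₂)
    (T : Finset (Fin D)) (hT : T.card = q) :
    (Nat.card {π : Equiv.Perm (Fin D) //
        (∀ i, π (π i) = i) ∧ (∀ i, π i ≠ i) ∧
        2 * t ≤ (Finset.univ.filter fun i : Fin D => i ∈ T ∧ π i ∈ T).card} : ℝ) /
      (Nat.card {π : Equiv.Perm (Fin D) //
        (∀ i, π (π i) = i) ∧ (∀ i, π i ≠ i)} : ℝ) ≤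
    ((Real.exp 1 * q) / (2 * t) * ((q : ℝ) / D)) ^ t := by
  subst hD hT
  rw [Nat.card_eq_fintype_card, Nat.card_eq_fintype_card,
    Fintype.card_of_subtype ((pairings univ).filter fun π =>
      2 * t ≤ (univ.filter fun i => i ∈ T ∧ π i ∈ T).card) fun π => by
        rw [mem_filter, mem_pairings_univ, and_assoc],
    Fintype.card_of_subtype _ fun _ => mem_pairings_univ,
    card_pairings (k := m₂) (by simp)]
  have hT : T.card ≤ 2 * m₂ := (card_le_univ T).trans_eq (Fintype.card_fin _)
  calc
    _ ≤ ((T.card.choose (2 * t) * (2 * t - 1)‼ * (2 * (m₂ - t) - 1)‼ : ℕ) : ℝ) /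
        (2 * m₂ - 1)‼ := by
      gcongr
      exact card_filter_pairs_within_le (Fintype.card_fin _) T t
    _ ≤ _ := by
      push_cast
      exact choose_mul_doubleFactorial_div_le hT t

/-- Pairing model (`h = 2` case): take a uniformly random perfect matching (a fixed-point
free involution) of `D = 2 m₂` balls, and fix a set `T` of `q` balls (the balls lying in
the bin-set `S`).  If `q < D/2`, then the probability that at least `t` pairs have both
balls in `T` is at most `((e q)/(2t) · (q/D))^t`. -/
theorem stmt17 (D m₂ q t : ℕ) (hD : D = 2 * m₂)
    (T : Finset (Fin D)) (hT : T.card = q) (hq : 2 * q < D) :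
    (Nat.card {π : Equiv.Perm (Fin D) //
        (∀ i, π (π i) = i) ∧ (∀ i, π i ≠ i) ∧
        2 * t ≤ (Finset.univ.filter fun i : Fin D => i ∈ T ∧ π i ∈ T).card} : ℝ) /
      (Nat.card {π : Equiv.Perm (Fin D) //
        (∀ i, π (π i) = i) ∧ (∀ i, π i ≠ i)} : ℝ) ≤
    ((Real.exp 1 * q) / (2 * t) * ((q : ℝ) / D)) ^ t :=
  stmt17_general D m₂ q t hD T hT
end

section
/- Let h ≥ 2 and let D balls be partitioned uniformly at random into parts, m_{h−j} parts of size h−j for j = 0,…,w−1, after being allocated into bins with exactly q balls in a fixed bin-set S. Assume q < D/h and that t → ∞ as n → ∞. Then the probability that Σ_{i=2}^h (i−1)·ρ(S,i) ≥ t is at most (e·h³·q²/(4tD))^t, where ρ(S,i) is the number of parts with exactly i balls in S. -/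
/-!
Call a ball of `T` *late* under `σ` if some smaller ball of `T` lies in the same part. The excess
`∑ (i - 1) ρ(S, i)` is at most the number of late balls, so if it reaches `t`, some `t`-subset
`R ⊆ T` consists of late balls. For fixed `R`, reveal `σ` on `T` in increasing order: given `σ`
below `x ∈ R`, the value `σ x` is uniform over at least `D - q` free positions, of which at most
`(h - 1) q` share a part with an earlier ball. Hence `P(R late) ≤ ((h - 1) q / (D - q))^t`, and the
union bound over `R`, together with `C(q, t) ≤ (e q / t)^t` and `4 D (h - 1) ≤ h³ (D - q)` (from
`h q < D`), gives the claim.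
-/

open Finset Equiv
open scoped Nat

section Fibers

variable {α β : Type*} [Fintype β]

theorem sum_sub_one_mul_card_filter_le (m : β → ℕ) (s : Finset ℕ) :
    ∑ i ∈ s, (i - 1) * #{p | m p = i} ≤ ∑ p, (m p - 1) :=
  calc ∑ i ∈ s, (i - 1) * #{p | m p = i} = ∑ i ∈ s, ∑ p with m p = i, (m p - 1) :=
        sum_congr rfl fun i _ => by
          rw [sum_congr rfl fun p hp => by rw [(mem_filter.1 hp).2], sum_const, smul_eq_mul,
            mul_comm]
    _ ≤ ∑ p, (m p - 1) := sum_fiberwise_le_sum_of_sum_fiber_nonneg fun _ _ => Nat.zero_le _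

theorem sum_card_fiber_sub_one_le [DecidableEq β] [LinearOrder α] (c : α → β) (T : Finset α) :
    ∑ p, (#{x ∈ T | c x = p} - 1) ≤ #{x ∈ T | ∃ y ∈ T, y < x ∧ c y = c x} := by
  rw [card_eq_sum_card_fiberwise (f := c) (t := univ) fun _ _ => mem_univ _]
  refine sum_le_sum fun p _ => ?_
  rcases ({x ∈ T | c x = p}).eq_empty_or_nonempty with hempty | hne
  · simp [hempty]
  refine (pred_card_le_card_erase (a := min' _ hne)).trans (card_le_card fun x hx => ?_)
  obtain ⟨hxmin, hx⟩ := mem_erase.1 hx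
  obtain ⟨hmT, hmp⟩ := mem_filter.1 (min'_mem _ hne)
  obtain ⟨hxT, hxp⟩ := mem_filter.1 hx
  exact mem_filter.2 ⟨mem_filter.2 ⟨hxT, _, hmT, (min'_le _ _ hx).lt_of_ne' hxmin,
    hmp.trans hxp.symm⟩, hxp⟩

end Fibers

section PermCounting

variable {α β : Type*} [Fintype α]

theorem card_filter_perm_apply_mem_mul_le [DecidableEq α] (B : Finset α) {x : α} (hx : x ∉ B)
    (P : Perm α → Prop) [DecidablePred P] (V : Perm α → Finset α) {v : ℕ}
    (hP : ∀ σ τ : Perm α, (∀ b ∈ B, σ b = τ b) → P σ → P τ)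
    (hV : ∀ σ τ : Perm α, (∀ b ∈ B, σ b = τ b) → V σ = V τ)
    (hv : ∀ σ, #(V σ) ≤ v) :
    #{σ | P σ ∧ σ x ∈ V σ} * (Fintype.card α - #B) ≤ v * #{σ | P σ} := by
  have hagree : ∀ σ : Perm α, ∀ z ∉ B.image σ, ∀ b ∈ B, (swap (σ x) z * σ) b = σ b := by
    intro σ z hz b hb
    refine swap_apply_of_ne_of_ne (σ.injective.ne (ne_of_mem_of_not_mem hb hx)) ?_
    rintro rfl
    exact hz (mem_image_of_mem σ hb)
  calc #{σ | P σ ∧ σ x ∈ V σ} * (Fintype.card α - #B)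
      = #(({σ | P σ ∧ σ x ∈ V σ} : Finset (Perm α)).sigma fun σ => (B.image σ)ᶜ) := by
        rw [card_sigma, sum_congr rfl fun σ _ => by
          rw [card_compl, card_image_of_injective _ σ.injective], sum_const, smul_eq_mul]
    _ ≤ #(({σ | P σ} : Finset (Perm α)).sigma V) := by
        -- Moving `x` to a free position by a transposition keeps `σ` on `B`; remembering the
        -- old value `σ x ∈ V σ` makes the move injective.
        refine card_le_card_of_injOn (fun p => ⟨swap (p.1 x) p.2 * p.1, p.1 x⟩) ?_ ?_
        · rintro ⟨σ, z⟩ hσz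
          simp only [coe_sigma, Set.mem_sigma_iff, coe_filter, mem_univ, true_and,
            Set.mem_ofPred_eq, mem_coe, mem_compl] at hσz ⊢
          obtain ⟨⟨hPσ, hσx⟩, hz⟩ := hσz
          have hBσ := hagree σ z hz
          exact ⟨hP _ _ (fun b hb => (hBσ b hb).symm) hPσ,
            hV _ _ (fun b hb => (hBσ b hb).symm) ▸ hσx⟩
        · rintro ⟨σ, z⟩ - ⟨σ', z'⟩ - hpair
          simp only [Sigma.mk.injEq, heq_eq_eq] at hpair
          obtain ⟨hτ, hσx⟩ := hpair
          have hz : z = z' := by simpa [hσx] using congrArg (· x) hτ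
          subst hz
          rw [hσx, mul_left_cancel_iff] at hτ
          rw [hτ]
    _ = ∑ σ with P σ, #(V σ) := card_sigma _ _
    _ ≤ v * #{σ | P σ} := by
        rw [mul_comm, ← smul_eq_mul]
        exact sum_le_card_nsmul _ _ _ fun σ _ => hv σ

theorem card_biUnion_erase_fiber_le [DecidableEq α] [DecidableEq β] (f : α → β) {h : ℕ}
    (hf : ∀ b, #{a | f a = b} ≤ h) (g : α → α) (B : Finset α) :
    #(B.biUnion fun y => ({z | f z = f (g y)} : Finset α).erase (g y)) ≤ (h - 1) * #B := by
  rw [mul_comm]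
  refine card_biUnion_le_card_mul _ _ _ fun y _ => ?_
  rw [card_erase_of_mem (by simp)]
  exact Nat.sub_le_sub_right (hf _) 1

theorem card_perm_forall_exists_lt_fiber_mul_le [DecidableEq β] [LinearOrder α] (f : α → β)
    {h : ℕ} (hf : ∀ b, #{a | f a = b} ≤ h) (A : Finset α) {R : Finset α} (hRA : R ⊆ A) :
    #{σ : Perm α | ∀ x ∈ R, ∃ y ∈ A, y < x ∧ f (σ y) = f (σ x)} * (Fintype.card α - #A) ^ #R
      ≤ ((h - 1) * #A) ^ #R * (Fintype.card α)! := by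
  induction R using Finset.induction_on_max with
  | empty => simp [Fintype.card_perm]
  | insert x R hlt ih =>
    set P : Perm α → Prop := fun σ => ∀ x' ∈ R, ∃ y ∈ A, y < x' ∧ f (σ y) = f (σ x')
    set B := A.filter (· < x)
    set V : Perm α → Finset α := fun σ =>
      B.biUnion fun y => ({z | f z = f (σ y)} : Finset α).erase (σ y)
    have hRB : ∀ x' ∈ R, ∀ y ∈ A, y ≤ x' → y ∈ B := fun x' hx' y hy hyx =>
      mem_filter.2 ⟨hy, hyx.trans_lt (hlt x' hx')⟩
    have hcount :
        #{σ | P σ ∧ σ x ∈ V σ} * (Fintype.card α - #B) ≤ (h - 1) * #B * #{σ | P σ} := by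
      refine card_filter_perm_apply_mem_mul_le B (fun hx => lt_irrefl x (mem_filter.1 hx).2) P V
        ?_ ?_ (card_biUnion_erase_fiber_le f hf · B)
      · intro σ τ hστ hσ x' hx'
        obtain ⟨y, hy, hyx, hfy⟩ := hσ x' hx'
        refine ⟨y, hy, hyx, ?_⟩
        rwa [← hστ y (hRB x' hx' y hy hyx.le),
          ← hστ x' (hRB x' hx' x' (hRA (mem_insert_of_mem hx')) le_rfl)]
      · exact fun σ τ hστ => biUnion_congr rfl fun y hy => by rw [hστ y hy]
    have hsub : ({σ | ∀ x' ∈ insert x R, ∃ y ∈ A, y < x' ∧ f (σ y) = f (σ x')} : Finset (Perm α))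
        ⊆ ({σ | P σ ∧ σ x ∈ V σ} : Finset (Perm α)) := by
      intro σ hσ
      simp only [mem_filter, mem_univ, true_and, forall_mem_insert] at hσ ⊢
      obtain ⟨⟨y, hy, hyx, hfy⟩, hR⟩ := hσ
      exact ⟨hR, mem_biUnion.2 ⟨y, mem_filter.2 ⟨hy, hyx⟩,
        mem_erase.2 ⟨σ.injective.ne hyx.ne', by simp [hfy]⟩⟩⟩
    have hBA : #B ≤ #A := card_le_card (filter_subset _ _)
    rw [card_insert_of_notMem fun hx => lt_irrefl x (hlt x hx), pow_succ, pow_succ]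
    calc _ ≤ #{σ | P σ ∧ σ x ∈ V σ} * (Fintype.card α - #B) * (Fintype.card α - #A) ^ #R := by
          rw [mul_comm _ (Fintype.card α - #A), ← mul_assoc]
          gcongr
      _ ≤ (h - 1) * #B * #{σ | P σ} * (Fintype.card α - #A) ^ #R := by gcongr
      _ ≤ (h - 1) * #A * (((h - 1) * #A) ^ #R * (Fintype.card α)!) := by
          rw [mul_assoc]
          exact Nat.mul_le_mul (Nat.mul_le_mul_left _ hBA) (ih ((subset_insert x R).trans hRA))
      _ = _ := by ring

theorem card_perm_le_card_filter_exists_lt_mul_le [DecidableEq β] [LinearOrder α] (f : α → β)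
    {h : ℕ} (hf : ∀ b, #{a | f a = b} ≤ h) (T : Finset α) (t : ℕ) :
    #{σ : Perm α | t ≤ #{x ∈ T | ∃ y ∈ T, y < x ∧ f (σ y) = f (σ x)}} * (Fintype.card α - #T) ^ t
      ≤ (#T).choose t * ((h - 1) * #T) ^ t * (Fintype.card α)! := by
  set E : Finset α → Finset (Perm α) := fun R =>
    {σ | ∀ x ∈ R, ∃ y ∈ T, y < x ∧ f (σ y) = f (σ x)}
  have hsub : ({σ | t ≤ #{x ∈ T | ∃ y ∈ T, y < x ∧ f (σ y) = f (σ x)}} : Finset (Perm α)) ⊆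
      (T.powersetCard t).biUnion E := by
    intro σ hσ
    obtain ⟨R, hRW, hR⟩ := exists_subset_card_eq (mem_filter.1 hσ).2
    exact mem_biUnion.2 ⟨R, mem_powersetCard.2 ⟨hRW.trans (filter_subset _ _), hR⟩,
      mem_filter.2 ⟨mem_univ _, fun x hx => (mem_filter.1 (hRW hx)).2⟩⟩
  calc _ ≤ (∑ R ∈ T.powersetCard t, #(E R)) * (Fintype.card α - #T) ^ t :=
        Nat.mul_le_mul_right _ ((card_le_card hsub).trans card_biUnion_le)
    _ = ∑ R ∈ T.powersetCard t, #(E R) * (Fintype.card α - #T) ^ t := sum_mul _ _ _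
    _ ≤ ∑ R ∈ T.powersetCard t, ((h - 1) * #T) ^ t * (Fintype.card α)! :=
        sum_le_sum fun R hR => by
          obtain ⟨hRT, rfl⟩ := mem_powersetCard.1 hR
          exact card_perm_forall_exists_lt_fiber_mul_le f hf T hRT
    _ = _ := by rw [sum_const, card_powersetCard, smul_eq_mul, mul_assoc]

end PermCounting

theorem choose_le_exp_mul_div_pow (q t : ℕ) : (q.choose t : ℝ) ≤ (Real.exp 1 * q / t) ^ t := by
  rcases t.eq_zero_or_pos with rfl | ht
  · simp
  have htR : (0 : ℝ) < t := by exact_mod_cast ht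
  calc (q.choose t : ℝ) ≤ q ^ t / t ! := Nat.choose_le_pow_div t q
    _ = (q / t) ^ t * ((t : ℝ) ^ t / t !) := by rw [div_pow]; field_simp
    _ ≤ (q / t) ^ t * Real.exp t := by gcongr; exact Real.pow_div_factorial_le_exp _ htR.le t
    _ = (Real.exp 1 * q / t) ^ t := by
        rw [mul_div_assoc, mul_pow, ← Real.exp_nat_mul, mul_one, mul_comm]

theorem four_mul_mul_sub_one_le_pow_three_mul_sub {h q d : ℕ} (hq : h * q < d) :
    4 * d * (h - 1) ≤ h ^ 3 * (d - q) := by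
  rcases le_or_gt h 1 with h1 | h2
  · simp [Nat.sub_eq_zero_of_le h1]
  have hd : (h - 1) * d ≤ h * (d - q) := by
    rw [Nat.sub_one_mul, Nat.mul_sub]
    omega
  calc 4 * d * (h - 1) ≤ h ^ 2 * ((h - 1) * d) := by
        rw [mul_comm (h - 1), ← mul_assoc]
        gcongr
        nlinarith
    _ ≤ h ^ 2 * (h * (d - q)) := Nat.mul_le_mul_left _ hd
    _ = h ^ 3 * (d - q) := by ring

theorem card_perm_excess_ge_div_factorial_le {α β : Type*} [Fintype α] [LinearOrder α]
    [Fintype β] [DecidableEq β] (pt : α → β) {h : ℕ} (hpt : ∀ p, #{x | pt x = p} ≤ h)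
    (T : Finset α) (hT : h * #T < Fintype.card α) (t : ℕ) :
    (#{σ : Perm α | t ≤ ∑ i ∈ Icc 2 h, (i - 1) * #{p | #{x ∈ T | pt (σ x) = p} = i}} : ℝ) /
        (Fintype.card α)!
      ≤ (Real.exp 1 * h ^ 3 * #T ^ 2 / (4 * t * Fintype.card α)) ^ t := by
  set d := Fintype.card α
  set q := #T
  have hh : 1 ≤ h := by
    obtain ⟨x⟩ := Fintype.card_pos_iff.1 (Nat.zero_lt_of_lt hT)
    exact (card_pos.2 ⟨x, by simp⟩).trans_le (hpt (pt x))
  have hqd : q < d := lt_of_le_of_lt (Nat.le_mul_of_pos_left q hh) hT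
  have hsub : ({σ : Perm α | t ≤ ∑ i ∈ Icc 2 h, (i - 1) * #{p | #{x ∈ T | pt (σ x) = p} = i}} :
      Finset (Perm α)) ⊆
      ({σ | t ≤ #{x ∈ T | ∃ y ∈ T, y < x ∧ pt (σ y) = pt (σ x)}} : Finset (Perm α)) :=
    monotone_filter_right _ fun σ _ hσ => hσ.trans <|
      (sum_sub_one_mul_card_filter_le _ _).trans (sum_card_fiber_sub_one_le (pt ∘ σ) T)
  have hcount := (Nat.mul_le_mul_right _ (card_le_card hsub)).trans
    (card_perm_le_card_filter_exists_lt_mul_le pt hpt T t)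
  have hdq : (0 : ℝ) < (d - q : ℕ) := by exact_mod_cast Nat.sub_pos_of_lt hqd
  have hkey : (4 * d * (h - 1 : ℕ) : ℝ) ≤ h ^ 3 * (d - q : ℕ) := by
    exact_mod_cast four_mul_mul_sub_one_le_pow_three_mul_sub hT
  rw [div_le_iff₀ (by positivity)]
  calc _ ≤ (q.choose t * ((h - 1 : ℕ) * q : ℝ) ^ t / ((d - q : ℕ) : ℝ) ^ t) * d ! := by
        rw [div_mul_eq_mul_div, le_div_iff₀ (by positivity)]
        exact_mod_cast hcount
    _ ≤ ((Real.exp 1 * q / t) ^ t * (((h - 1 : ℕ) * q : ℝ) / (d - q : ℕ)) ^ t) * d ! := by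
        rw [mul_div_assoc, ← div_pow]
        gcongr
        exact choose_le_exp_mul_div_pow q t
    _ ≤ _ := by
        rw [← mul_pow]
        gcongr
        rcases t.eq_zero_or_pos with rfl | ht
        · simp
        have hd : (0 : ℝ) < d := by exact_mod_cast Nat.zero_lt_of_lt hT
        rw [div_mul_div_comm, div_le_div_iff₀ (by positivity) (by positivity)]
        have := mul_le_mul_of_nonneg_left hkey (by positivity : (0 : ℝ) ≤ Real.exp 1 * q ^ 2 * t)
        linarith

theorem stmt19_general (h w : ℕ) (D q t N : ℕ → ℕ) (pt : (n : ℕ) → Fin (D n) → Fin (N n))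
    (hpart : ∀ n : ℕ, ∀ p : Fin (N n),
      h - w + 1 ≤ Nat.card {x : Fin (D n) // pt n x = p} ∧
        Nat.card {x : Fin (D n) // pt n x = p} ≤ h)
    (T : (n : ℕ) → Finset (Fin (D n))) (hT : ∀ n, (T n).card = q n)
    (hq : ∀ n, h * q n < D n) :
    ∀ᶠ n : ℕ in Filter.atTop,
      (Nat.card {σ : Equiv.Perm (Fin (D n)) //
          t n ≤ ∑ i ∈ Finset.Icc 2 h, (i - 1) *
            (Finset.univ.filter (fun p : Fin (N n) =>
              ((T n).filter fun x => pt n (σ x) = p).card = i)).card} : ℝ) /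
        (Nat.card (Equiv.Perm (Fin (D n))) : ℝ) ≤
      (Real.exp 1 * (h : ℝ) ^ 3 * (q n : ℝ) ^ 2 / (4 * (t n : ℝ) * (D n : ℝ))) ^ (t n) := by
  refine Filter.Eventually.of_forall fun n => ?_
  have hfib : ∀ p, #{x | pt n x = p} ≤ h := fun p => by
    simpa only [Nat.card_eq_fintype_card, Fintype.card_subtype] using (hpart n p).2
  have := card_perm_excess_ge_div_factorial_le (pt n) hfib (T n)
    (by simpa only [hT n, Fintype.card_fin] using hq n) (t n)
  simpa only [Nat.card_eq_fintype_card, Fintype.card_subtype, Fintype.card_perm,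
    Fintype.card_fin, hT n] using this

/-- General partition-allocation claim (`c:p(q)`).  `D n` balls are partitioned uniformly
at random into parts of sizes between `h−w+1` and `h` (the random partition is obtained
by pulling back a fixed partition `pt n` along a uniform permutation `σ`); a set `T n` of
exactly `q n` balls lies in the bin-set `S`.  Let `ρ(S,i)` be the number of parts with
exactly `i` balls in `T n`.  If `q n < D n / h` and `t n → ∞`, then eventually the
probability that `∑_{i=2}^h (i−1) ρ(S,i) ≥ t n` is at most `(e h³ q²/(4 t D))^t`. -/
theorem stmt19 (h w : ℕ) (hw : 0 < w) (hwh : w < h)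
    (D q t N : ℕ → ℕ) (pt : (n : ℕ) → Fin (D n) → Fin (N n))
    (hpart : ∀ n : ℕ, ∀ p : Fin (N n),
      h - w + 1 ≤ Nat.card {x : Fin (D n) // pt n x = p} ∧
        Nat.card {x : Fin (D n) // pt n x = p} ≤ h)
    (T : (n : ℕ) → Finset (Fin (D n))) (hT : ∀ n, (T n).card = q n)
    (hq : ∀ n, h * q n < D n)
    (ht : Filter.Tendsto t Filter.atTop Filter.atTop) :
    ∀ᶠ n : ℕ in Filter.atTop,
      (Nat.card {σ : Equiv.Perm (Fin (D n)) //
          t n ≤ ∑ i ∈ Finset.Icc 2 h, (i - 1) *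
            (Finset.univ.filter (fun p : Fin (N n) =>
              ((T n).filter fun x => pt n (σ x) = p).card = i)).card} : ℝ) /
        (Nat.card (Equiv.Perm (Fin (D n))) : ℝ) ≤
      (Real.exp 1 * (h : ℝ) ^ 3 * (q n : ℝ) ^ 2 / (4 * (t n : ℝ) * (D n : ℝ))) ^ (t n) :=
  stmt19_general h w D q t N pt hpart T hT hq
end
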